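/- arXiv:2108.07051 — 5 statements merged into one kernel-verified Lean document; each statement's English description precedes it below -/
import Mathlib

section
/- Let C be a class of connected graphs with maximum order h*. If a graph G has a pendant appearance of a graph H0 in C on a vertex set W, and G' = G \ W, then the number of pendant appearances of graphs in C present in G but not in G' is at most 2h*. -/
/-- Number of ordered crossing adjacent pairs between `W` and its complement. -/
noncomputable def crossCount {V : Type*} (G : SimpleGraph V) (W : Finset V) : ℕ :=
  Nat.card {p : V × V // p.1 ∈ W ∧ p.2 ∉ W ∧ G.Adj p.1 p.2}

/-- Membership of a graph `H` in an isomorphism-closed class `C` of (labelled) graphs,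
given as a family `C m ⊆ SimpleGraph (Fin m)`. -/
def memClass (C : ∀ m : ℕ, Set (SimpleGraph (Fin m))) {V : Type*} (H : SimpleGraph V) : Prop :=
  ∃ H' ∈ C (Nat.card V), Nonempty (H ≃g H')

/-- The set of pendant appearances in `G` of graphs in the class `C`: vertex sets `W`
with exactly one (oriented) link edge leaving `W`, inducing a graph in `C`. -/
def pendSet (C : ∀ m : ℕ, Set (SimpleGraph (Fin m))) {n : ℕ} (G : SimpleGraph (Fin n)) :
    Set (Finset (Fin n)) :=
  {W | crossCount G W = 1 ∧ memClass C (G.induce (W : Set (Fin n)))}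

/-- The graph `G \ W`: delete (i.e. isolate) the vertices of `W`. -/
def isolate {V : Type*} (G : SimpleGraph V) (W : Finset V) : SimpleGraph V where
  Adj u v := G.Adj u v ∧ u ∉ W ∧ v ∉ W
  symm := ⟨fun _ _ ⟨hadj, hu, hv⟩ => ⟨hadj.symm, hv, hu⟩⟩
  loopless := ⟨fun v hv => G.loopless.irrefl v hv.1⟩

namespace PendAux

open SimpleGraph

variable {V : Type*}

/-- oriented cross pair predicate -/
def cp (G : SimpleGraph V) (S : Finset V) (p : V × V) : Prop :=
  p.1 ∈ S ∧ p.2 ∉ S ∧ G.Adj p.1 p.2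

lemma isolate_adj {G : SimpleGraph V} {W : Finset V} {u v : V} :
    (isolate G W).Adj u v ↔ G.Adj u v ∧ u ∉ W ∧ v ∉ W := Iff.rfl

lemma crossCount_eq_one_iff {G : SimpleGraph V} {S : Finset V} :
    crossCount G S = 1 ↔ ∃! p : V × V, cp G S p := by
  rw [crossCount, Nat.card_eq_one_iff_exists]
  constructor
  · rintro ⟨⟨p, hp⟩, hu⟩
    exact ⟨p, hp, fun q hq => congrArg Subtype.val (hu ⟨q, hq⟩)⟩
  · rintro ⟨p, hp, hu⟩
    exact ⟨⟨p, hp⟩, fun q => Subtype.ext (hu _ q.2)⟩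

/-- the pendant-like predicate -/
def plike (G : SimpleGraph V) (S : Finset V) : Prop :=
  (G.induce (↑S : Set V)).Connected ∧ ∃! p : V × V, cp G S p

/-- homomorphism from an induced subgraph to the big graph -/
def inducedHom (G : SimpleGraph V) (s : Set V) : G.induce s →g G where
  toFun := Subtype.val
  map_rel' := fun h => h

lemma reachable_of_induce {G : SimpleGraph V} {S : Finset V}
    (h : (G.induce (↑S : Set V)).Connected) {z x : V} (hz : z ∈ S) (hx : x ∈ S) :
    ∃ w : G.Walk z x, ∀ v ∈ w.support, v ∈ S := by
  obtain ⟨w0⟩ := h.preconnected ⟨z, by simpa⟩ ⟨x, by simpa⟩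
  refine ⟨w0.map (inducedHom G (↑S : Set V)), ?_⟩
  intro v hv
  have hv2 : v ∈ (w0.map (inducedHom G (↑S : Set V))).support := hv
  rw [SimpleGraph.Walk.support_map] at hv2
  obtain ⟨⟨v', hv'⟩, _, rfl⟩ := List.mem_map.mp hv2
  exact hv'

lemma core {G : SimpleGraph V} {S T : Finset V} (hS : (G.induce (↑S : Set V)).Connected)
    {z x : V} (hz : z ∈ S) (hx : x ∈ S) (hzT : z ∈ T) (hxT : x ∉ T)
    {q : V × V} (hT : ∀ r, cp G T r → r = q) :
    q.1 ∈ S ∧ q.2 ∈ S := by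
  obtain ⟨w, hw⟩ := reachable_of_induce hS hz hx
  obtain ⟨d, hd, h1, h2⟩ := w.exists_boundary_dart (↑T) (by simpa) (by simpa)
  have hq := hT (d.fst, d.snd) ⟨by simpa using h1, by simpa using h2, d.adj⟩
  constructor
  · rw [← hq]
    exact hw _ (SimpleGraph.Walk.dart_fst_mem_support_of_mem_darts _ hd)
  · rw [← hq]
    exact hw _ (SimpleGraph.Walk.dart_snd_mem_support_of_mem_darts _ hd)

lemma subset_of {G : SimpleGraph V} {S S' : Finset V}
    (hS : (G.induce (↑S : Set V)).Connected)
    {q' : V × V} (hu' : ∀ r, cp G S' r → r = q') (hq'2 : q'.2 ∉ S)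
    {z : V} (hz : z ∈ S) (hz' : z ∈ S') : S ⊆ S' := by
  intro x hx
  by_contra hx'
  exact hq'2 (core hS hz hx hz' hx' hu').2

lemma eq_of_tail {G : SimpleGraph V} {S S' : Finset V}
    (hS : (G.induce (↑S : Set V)).Connected) (hS' : (G.induce (↑S' : Set V)).Connected)
    {q q' : V × V} (hq : cp G S q) (hu : ∀ r, cp G S r → r = q)
    (hq' : cp G S' q') (hu' : ∀ r, cp G S' r → r = q')
    (ht : q.2 = q'.2) {z : V} (hz : z ∈ S) (hz' : z ∈ S') : S = S' :=
  subset_antisymm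
    (subset_of hS hu' (by rw [← ht]; exact hq.2.1) hz hz')
    (subset_of hS' hu (by rw [ht]; exact hq'.2.1) hz' hz)

lemma snd_eq_of_darts {G : SimpleGraph V} {u t : V} (w : G.Walk u t) (hnd : w.support.Nodup)
    {d d' : G.Dart} (hd : d ∈ w.darts) (hd' : d' ∈ w.darts)
    (h1 : d.fst = u) (h2 : d'.fst = u) : d.snd = d'.snd := by
  cases w with
  | nil => simp at hd
  | @cons _ v _ h p =>
    have hu : u ∉ p.support := by
      rw [SimpleGraph.Walk.support_cons] at hnd
      exact (List.nodup_cons.mp hnd).1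
    have key : ∀ e : G.Dart, e ∈ (SimpleGraph.Walk.cons h p).darts → e.fst = u → e.snd = v := by
      intro e he hf
      rw [SimpleGraph.Walk.darts_cons] at he
      rcases List.mem_cons.mp he with h1 | h2
      · rw [h1]
      · exact absurd (hf ▸ SimpleGraph.Walk.dart_fst_mem_support_of_mem_darts p h2) hu
    rw [key d hd h1, key d' hd' h2]

end PendAux

namespace PendAux
open SimpleGraph

variable {V : Type*}

lemma family_bound [Fintype V] [DecidableEq V] (H : SimpleGraph V) (b : V) (s : ℕ) :
    {S : Finset V | plike H S ∧ b ∈ S ∧ S.card ≤ s}.ncard ≤ s := by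
  classical
  set F := {S : Finset V | plike H S ∧ b ∈ S ∧ S.card ≤ s} with hFdef
  rcases F.eq_empty_or_nonempty with h | hne
  · simp [h]
  obtain ⟨T, hTF, hTmax⟩ := Set.exists_max_image F Finset.card (Set.toFinite F) hne
  haveI : Nonempty V := ⟨b⟩
  set f : Finset V → V := fun S => if h : ∃! p : V × V, cp H S p then h.choose.2 else b with hfdef
  have hfs : ∀ S : Finset V, (h : ∃! p : V × V, cp H S p) →
      cp H S h.choose ∧ (∀ r, cp H S r → r = h.choose) ∧ f S = h.choose.2 := by
    intro S h
    exact ⟨h.choose_spec.1, fun r hr => h.choose_spec.2 r hr, dif_pos h⟩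
  obtain ⟨⟨hTconn, hTex⟩, hTb, hTcard⟩ := hTF
  obtain ⟨hqT, huT, hfT⟩ := hfs T hTex
  have key : F.ncard ≤ ((insert (f T) (T.erase b) : Finset V) : Set V).ncard := by
    apply Set.ncard_le_ncard_of_injOn f _ _ (Set.toFinite _)
    · -- maps to
      intro S hS
      obtain ⟨⟨hSconn, hSex⟩, hSb, hScard⟩ := hS
      obtain ⟨hqS, huS, hfS⟩ := hfs S hSex
      simp only [Finset.coe_insert, Set.mem_insert_iff, Finset.coe_erase, Set.mem_diff,
        Finset.mem_coe, Set.mem_singleton_iff]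
      by_cases hsub : S ⊆ T
      · by_cases h2 : hSex.choose.2 ∈ T
        · right
          refine ⟨by rw [hfS]; exact h2, ?_⟩
          rw [hfS]
          intro hcon
          exact hqS.2.1 (hcon ▸ hSb)
        · left
          have : hSex.choose = hTex.choose := huT _ ⟨hsub hqS.1, h2, hqS.2.2⟩
          rw [hfS, hfT, this]
      · have hTS : ¬ T ⊆ S := by
          intro hTS
          have hss : T ⊂ S := ⟨hTS, hsub⟩
          have := Finset.card_lt_card hss
          have := hTmax S (by exact ⟨⟨hSconn, hSex⟩, hSb, hScard⟩)
          omega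
        obtain ⟨y, hyT, hyS⟩ := Finset.not_subset.mp hTS
        have hco := core hTconn hTb hyT hSb hyS huS
        right
        refine ⟨by rw [hfS]; exact hco.2, ?_⟩
        rw [hfS]
        intro hcon
        exact hqS.2.1 (hcon ▸ hSb)
    · -- injective
      intro S1 h1 S2 h2 heq
      obtain ⟨⟨h1conn, h1ex⟩, h1b, _⟩ := h1
      obtain ⟨⟨h2conn, h2ex⟩, h2b, _⟩ := h2
      obtain ⟨hq1, hu1, hf1⟩ := hfs S1 h1ex
      obtain ⟨hq2, hu2, hf2⟩ := hfs S2 h2ex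
      exact eq_of_tail h1conn h2conn hq1 hu1 hq2 hu2 (by rw [← hf1, ← hf2, heq]) h1b h2b
  refine key.trans ?_
  rw [Set.ncard_coe_finset]
  have h1 := Finset.card_insert_le (f T) (T.erase b)
  have h2 := Finset.card_erase_of_mem hTb
  have h3 : 1 ≤ T.card := Finset.card_pos.mpr ⟨b, hTb⟩
  omega

end PendAux

namespace PendAux
open SimpleGraph

variable {V : Type*}

lemma isolate_reach [DecidableEq V] {G : SimpleGraph V} {W X : Finset V} {a b : V}
    (hu : ∀ r : V × V, cp G W r → r = (a, b)) :
    ∀ {y t : V} (w : G.Walk y t), (∀ v ∈ w.support, v ∈ X) → y ∉ W → t ∈ W →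
      ∀ (hym : y ∈ (↑(X \ W) : Set V)) (hbm : b ∈ (↑(X \ W) : Set V)),
      ((isolate G W).induce (↑(X \ W) : Set V)).Reachable ⟨y, hym⟩ ⟨b, hbm⟩ := by
  intro y t w
  induction w with
  | nil =>
    intro hs hy ht hym hbm
    exact absurd ht hy
  | @cons y z t h p ih =>
    intro hs hy ht hym hbm
    by_cases hz : z ∈ W
    · have hyb : y = b := congrArg Prod.snd (hu (z, y) ⟨hz, hy, h.symm⟩)
      have : (⟨y, hym⟩ : (↑(X \ W) : Set V)) = ⟨b, hbm⟩ := Subtype.ext hyb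
      rw [this]
    · have hzX : z ∈ X := hs z (by rw [SimpleGraph.Walk.support_cons]; simp)
      have hzm : z ∈ (↑(X \ W) : Set V) := by simp [Finset.mem_sdiff, hzX, hz]
      refine SimpleGraph.Reachable.trans (SimpleGraph.Adj.reachable ?_)
        (ih (fun v hv => hs v (by rw [SimpleGraph.Walk.support_cons]; exact List.mem_cons_of_mem _ hv)) hz ht hzm hbm)
      exact ⟨h, hy, hz⟩

end PendAux


open PendAux in
/-- if `C` is a class of connected graphs of maximum order `h*`, `G` has a
pendant appearance of a graph of `C` on `W`, and `G' = G \ W`, then the number of pendant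
appearances of graphs of `C` present in `G` but not in `G'` is at most `2 h*`. -/
theorem stmt1 (hstar : ℕ) (C : ∀ m : ℕ, Set (SimpleGraph (Fin m)))
    (hconn : ∀ m, ∀ H ∈ C m, SimpleGraph.Connected H)
    (hmax : ∀ m, (C m).Nonempty → m ≤ hstar)
    (hattain : ∃ m, ∃ H, H ∈ C m ∧ m = hstar)
    {n : ℕ} (G : SimpleGraph (Fin n)) (W : Finset (Fin n))
    (hW : W ∈ pendSet C G) :
    Nat.card ↥(pendSet C G \ pendSet C (isolate G W)) ≤ 2 * hstar := by
  classical
  have hplike : ∀ (G₀ : SimpleGraph (Fin n)) (W' : Finset (Fin n)),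
      W' ∈ pendSet C G₀ → plike G₀ W' := by
    intro G₀ W' hW'
    obtain ⟨hcc, hmem⟩ := hW'
    refine ⟨?_, crossCount_eq_one_iff.mp hcc⟩
    obtain ⟨H', hH', ⟨e⟩⟩ := hmem
    exact e.connected_iff.mpr (hconn _ _ hH')
  have hcard_le : ∀ (G₀ : SimpleGraph (Fin n)) (W' : Finset (Fin n)),
      W' ∈ pendSet C G₀ → W'.card ≤ hstar := by
    intro G₀ W' hW'
    obtain ⟨_, H', hH', _⟩ := hW'
    have := hmax _ ⟨H', hH'⟩
    rwa [Nat.card_coe_set_eq, Set.ncard_coe_finset] at this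
  obtain ⟨hWconn, hWex⟩ := hplike G W hW
  obtain ⟨⟨a, b⟩, hpab, hWuniq⟩ := hWex
  have ha : a ∈ W := hpab.1
  have hb : b ∉ W := hpab.2.1
  have hab : G.Adj a b := hpab.2.2
  have hWcard : W.card ≤ hstar := hcard_le G W hW
  have hW1 : 1 ≤ W.card := Finset.card_pos.mpr ⟨a, ha⟩
  -- the link function
  set lk : Finset (Fin n) → (Fin n) × (Fin n) :=
    fun S => if h : ∃! p : (Fin n) × (Fin n), cp G S p then h.choose else (a, b) with hlkdef
  have hlk : ∀ S : Finset (Fin n), (h : ∃! p : (Fin n) × (Fin n), cp G S p) →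
      cp G S (lk S) ∧ ∀ r, cp G S r → r = lk S := by
    intro S h
    rw [hlkdef]
    simp only [dif_pos h]
    exact ⟨h.choose_spec.1, fun r hr => h.choose_spec.2 r hr⟩
  set D1 : Set (Finset (Fin n)) :=
    {W' | W' ∈ pendSet C G \ pendSet C (isolate G W) ∧ ∀ x ∈ W', x ∉ W} with hD1def
  set D2 : Set (Finset (Fin n)) := {W' | W' ∈ pendSet C G ∧ W' ⊂ W} with hD2def
  set D4 : Set (Finset (Fin n)) := {W' | W' ∈ pendSet C G ∧ (∃ x ∈ W', x ∈ W) ∧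
    (∃ x ∈ W, x ∉ W') ∧ (∃ x ∈ W', x ∉ W)} with hD4def
  set D5 : Set (Finset (Fin n)) := {W' | W' ∈ pendSet C G ∧ W ⊂ W'} with hD5def
  have hcover : pendSet C G \ pendSet C (isolate G W) ⊆ (((D1 ∪ D2) ∪ {W}) ∪ D4) ∪ D5 := by
    intro W' hW'
    by_cases hint : ∀ x ∈ W', x ∉ W
    · exact Or.inl (Or.inl (Or.inl (Or.inl ⟨hW', hint⟩)))
    · push_neg at hint
      obtain ⟨x0, hx0, hx0W⟩ := hint
      by_cases hout : ∃ x ∈ W', x ∉ W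
      · by_cases hmiss : ∃ x ∈ W, x ∉ W'
        · exact Or.inl (Or.inr ⟨hW'.1, ⟨x0, hx0, hx0W⟩, hmiss, hout⟩)
        · push_neg at hmiss
          obtain ⟨y0, hy0, hy0W⟩ := hout
          refine Or.inr ⟨hW'.1, hmiss, fun hc => hy0W (hc hy0)⟩
      · push_neg at hout
        by_cases heq : W' = W
        · exact Or.inl (Or.inl (Or.inr heq))
        · exact Or.inl (Or.inl (Or.inl (Or.inr ⟨hW'.1, Finset.ssubset_iff_subset_ne.mpr ⟨hout, heq⟩⟩)))
  have c1 : D1.ncard ≤ 1 := by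
    have hD1key : ∀ X ∈ D1, (G.induce (↑X : Set (Fin n))).Connected ∧ cp G X (b, a) ∧
        ∀ r, cp G X r → r = (b, a) := by
      intro X hX
      obtain ⟨⟨hXG, hXG'⟩, hdisj⟩ := hX
      obtain ⟨hXconn, hXex⟩ := hplike G X hXG
      obtain ⟨⟨u, v⟩, hq, hqu⟩ := hXex
      by_cases hq2 : v ∈ W
      · have heq := hWuniq (v, u) ⟨hq2, hdisj _ hq.1, hq.2.2.symm⟩
        rw [Prod.ext_iff] at heq
        obtain ⟨hva, hub⟩ := heq
        simp only at hva hub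
        subst hva; subst hub
        exact ⟨hXconn, hq, hqu⟩
      · exfalso
        apply hXG'
        refine ⟨?_, ?_⟩
        · rw [crossCount_eq_one_iff]
          refine ⟨(u, v), ⟨hq.1, hq.2.1, hq.2.2, hdisj _ hq.1, hq2⟩, ?_⟩
          intro r hr
          exact hqu r ⟨hr.1, hr.2.1, hr.2.2.1⟩
        · obtain ⟨H', hH', ⟨e⟩⟩ := hXG.2
          have iso0 : (isolate G W).induce (↑X : Set (Fin n)) ≃g G.induce (↑X : Set (Fin n)) :=
            { toEquiv := Equiv.refl _,
                  map_rel_iff' := by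
                    intro s t
                    constructor
                    · intro h
                      exact ⟨h, hdisj _ s.2, hdisj _ t.2⟩
                    · intro h
                      exact h.1 }
          exact ⟨H', hH', ⟨iso0.trans e⟩⟩
    rcases D1.eq_empty_or_nonempty with h | ⟨X0, hX0⟩
    · simp [h]
    · have hsub : D1 ⊆ {X0} := by
        intro Y hY
        obtain ⟨hYconn, hYq, hYu⟩ := hD1key Y hY
        obtain ⟨hXconn, hXq, hXu⟩ := hD1key X0 hX0
        have : Y = X0 := eq_of_tail hYconn hXconn hYq hYu hXq hXu rfl hYq.1 hXq.1
        simpa using this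
      have := Set.ncard_le_ncard hsub (Set.toFinite _)
      simpa using this
  have c2 : D2.ncard ≤ W.card - 1 := by
    have key : ∀ X ∈ D2, (G.induce (↑X : Set (Fin n))).Connected ∧ cp G X (lk X) ∧
        (∀ r, cp G X r → r = lk X) ∧ a ∉ X ∧ (lk X).1 ∈ W.erase a := by
      intro X hX
      obtain ⟨hXG, hXW⟩ := hX
      obtain ⟨hXconn, hXex⟩ := hplike G X hXG
      obtain ⟨hq, hqu⟩ := hlk X hXex
      have haX : a ∉ X := by
        intro haX
        obtain ⟨x, hxW, hxX⟩ := Finset.exists_of_ssubset hXW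
        have hco := core hWconn ha hxW haX hxX hqu
        have hba : (a, b) = lk X := hqu (a, b) ⟨haX, fun hbX => hb (hXW.1 hbX), hab⟩
        have hb2 : (lk X).2 = b := by rw [← hba]
        exact hb (hb2 ▸ hco.2)
      have h1W : (lk X).1 ∈ W := hXW.1 hq.1
      have h1a : (lk X).1 ≠ a := fun hc => haX (hc ▸ hq.1)
      exact ⟨hXconn, hq, hqu, haX, Finset.mem_erase.mpr ⟨h1a, h1W⟩⟩
    have hmap : D2.ncard ≤ ((↑(W.erase a) : Set (Fin n))).ncard := by
      apply Set.ncard_le_ncard_of_injOn (fun S => (lk S).1) _ _ (Set.toFinite _)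
      · intro X hX
        exact (key X hX).2.2.2.2
      · intro X hXm Y hYm heq
        simp only at heq
        obtain ⟨hXconn, hqX, hquX, haX, h1X⟩ := key X hXm
        obtain ⟨hYconn, hqY, hquY, haY, h1Y⟩ := key Y hYm
        have h2XW : (lk X).2 ∈ W := by
          by_contra h2W
          have := hWuniq (lk X) ⟨Finset.mem_of_mem_erase h1X, h2W, hqX.2.2⟩
          exact (Finset.ne_of_mem_erase h1X) (by rw [this])
        obtain ⟨w0, hw0⟩ := reachable_of_induce hWconn (Finset.mem_of_mem_erase h1X) ha
        set p := w0.toPath with hpdef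
        have hnd : p.1.support.Nodup := p.2.support_nodup
        have hsupp : p.1.support ⊆ w0.support := SimpleGraph.Walk.support_toPath_subset w0
        obtain ⟨dX, hdX, hdX1, hdX2⟩ := p.1.exists_boundary_dart (↑X) (by simpa using hqX.1) (by simpa using haX)
        obtain ⟨dY, hdY, hdY1, hdY2⟩ := p.1.exists_boundary_dart (↑Y) (by simpa [← heq] using hqY.1) (by simpa using haY)
        have hdXq : (dX.fst, dX.snd) = lk X := hquX _ ⟨by simpa using hdX1, by simpa using hdX2, dX.adj⟩
        have hdYq : (dY.fst, dY.snd) = lk Y := hquY _ ⟨by simpa using hdY1, by simpa using hdY2, dY.adj⟩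
        have hfX : dX.fst = (lk X).1 := by rw [← hdXq]
        have hfY : dY.fst = (lk X).1 := by rw [heq, ← hdYq]
        have hsnd := snd_eq_of_darts p.1 hnd hdX hdY hfX hfY
        have htl : (lk X).2 = (lk Y).2 := by
          rw [← hdXq, ← hdYq]
          exact hsnd
        exact eq_of_tail hXconn hYconn hqX hquX hqY hquY htl hqX.1 (heq ▸ hqY.1)
    refine hmap.trans ?_
    rw [Set.ncard_coe_finset, Finset.card_erase_of_mem ha]
  have c4 : D4.ncard ≤ W.card - 1 := by
    have key : ∀ X ∈ D4, (G.induce (↑X : Set (Fin n))).Connected ∧ cp G X (lk X) ∧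
        (∀ r, cp G X r → r = lk X) ∧ a ∈ X ∧ (lk X).2 ∈ W.erase a := by
      intro X hX
      obtain ⟨hXG, ⟨x1, hx1X, hx1W⟩, ⟨x2, hx2W, hx2X⟩, ⟨x3, hx3X, hx3W⟩⟩ := hX
      obtain ⟨hXconn, hXex⟩ := hplike G X hXG
      obtain ⟨hq, hqu⟩ := hlk X hXex
      have habX := core hXconn hx1X hx3X hx1W hx3W hWuniq
      have haX : a ∈ X := habX.1
      have htl := core hWconn ha hx2W haX hx2X hqu
      have h2a : (lk X).2 ≠ a := fun hc => hq.2.1 (hc ▸ haX)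
      exact ⟨hXconn, hq, hqu, haX, Finset.mem_erase.mpr ⟨h2a, htl.2⟩⟩
    have hmap : D4.ncard ≤ ((↑(W.erase a) : Set (Fin n))).ncard := by
      apply Set.ncard_le_ncard_of_injOn (fun S => (lk S).2) _ _ (Set.toFinite _)
      · intro X hX
        exact (key X hX).2.2.2.2
      · intro X hXm Y hYm heq
        simp only at heq
        obtain ⟨hXconn, hqX, hquX, haX, _⟩ := key X hXm
        obtain ⟨hYconn, hqY, hquY, haY, _⟩ := key Y hYm
        exact eq_of_tail hXconn hYconn hqX hquX hqY hquY heq haX haY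
    refine hmap.trans ?_
    rw [Set.ncard_coe_finset, Finset.card_erase_of_mem ha]
  have c5 : D5.ncard ≤ hstar - W.card := by
    have key : ∀ X ∈ D5, plike (isolate G W) (X \ W) ∧ b ∈ X \ W ∧
        (X \ W).card ≤ hstar - W.card := by
      intro X hX
      obtain ⟨hXG, hWX⟩ := hX
      obtain ⟨hXconn, hXex⟩ := hplike G X hXG
      obtain ⟨hq, hqu⟩ := hlk X hXex
      obtain ⟨x, hxX, hxW⟩ := Finset.exists_of_ssubset hWX
      have habX := core hXconn (hWX.1 ha) hxX ha hxW hWuniq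
      have hbX : b ∈ X := habX.2
      have hbXW : b ∈ X \ W := Finset.mem_sdiff.mpr ⟨hbX, hb⟩
      have hXcard := hcard_le G X hXG
      have hcard : (X \ W).card ≤ hstar - W.card := by
        rw [Finset.card_sdiff_of_subset hWX.1]
        have := Finset.card_le_card hWX.1
        omega
      have h2W : (lk X).2 ∉ W := fun h2W => hq.2.1 (hWX.1 h2W)
      have h1 : (lk X).1 ∉ W := by
        intro h1W
        have hba := hWuniq (lk X) ⟨h1W, h2W, hq.2.2⟩
        exact hq.2.1 (by rw [hba]; exact hbX)
      refine ⟨⟨?_, ?_⟩, hbXW, hcard⟩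
      · -- connectivity of the piece in the isolated graph
        rw [SimpleGraph.connected_iff]
        have hbm : b ∈ (↑(X \ W) : Set (Fin n)) := by simpa using hbXW
        refine ⟨?_, ⟨⟨b, hbm⟩⟩⟩
        have hreach : ∀ y : (↑(X \ W) : Set (Fin n)),
            ((isolate G W).induce (↑(X \ W) : Set (Fin n))).Reachable y ⟨b, hbm⟩ := by
          rintro ⟨y, hy⟩
          have hy' : y ∈ X \ W := by simpa using hy
          have hyX : y ∈ X := (Finset.mem_sdiff.mp hy').1
          have hyW : y ∉ W := (Finset.mem_sdiff.mp hy').2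
          obtain ⟨w0, hw0⟩ := reachable_of_induce hXconn hyX (hWX.1 ha)
          exact isolate_reach hWuniq w0 hw0 hyW ha hy hbm
        intro u v
        exact (hreach u).trans (hreach v).symm
      · -- unique cross pair
        refine ⟨lk X, ⟨Finset.mem_sdiff.mpr ⟨hq.1, h1⟩, ?_, hq.2.2, h1, h2W⟩, ?_⟩
        · intro hc
          exact hq.2.1 (Finset.mem_sdiff.mp hc).1
        · intro r hr
          obtain ⟨hr1, hr2, hr3, hr4, hr5⟩ := hr
          apply hqu
          refine ⟨(Finset.mem_sdiff.mp hr1).1, ?_, hr3⟩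
          intro hc
          exact hr2 (Finset.mem_sdiff.mpr ⟨hc, hr5⟩)
    have hmap : D5.ncard ≤
        {S : Finset (Fin n) | plike (isolate G W) S ∧ b ∈ S ∧ S.card ≤ hstar - W.card}.ncard := by
      apply Set.ncard_le_ncard_of_injOn (fun S => S \ W) _ _ (Set.toFinite _)
      · intro X hX
        exact key X hX
      · intro X hXm Y hYm heq
        simp only at heq
        have hX : X \ W ∪ W = X := Finset.sdiff_union_of_subset hXm.2.1
        have hY : Y \ W ∪ W = Y := Finset.sdiff_union_of_subset hYm.2.1
        rw [← hX, ← hY, heq]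
    exact hmap.trans (family_bound (isolate G W) b (hstar - W.card))
  rw [Nat.card_coe_set_eq]
  have step1 : (pendSet C G \ pendSet C (isolate G W)).ncard ≤
      ((((D1 ∪ D2) ∪ {W}) ∪ D4) ∪ D5).ncard :=
    Set.ncard_le_ncard hcover (Set.toFinite _)
  have step2 : ((((D1 ∪ D2) ∪ {W}) ∪ D4) ∪ D5).ncard ≤
      D1.ncard + D2.ncard + 1 + D4.ncard + D5.ncard := by
    calc ((((D1 ∪ D2) ∪ {W}) ∪ D4) ∪ D5).ncard
        ≤ (((D1 ∪ D2) ∪ {W}) ∪ D4).ncard + D5.ncard := Set.ncard_union_le _ _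
      _ ≤ ((D1 ∪ D2) ∪ {W}).ncard + D4.ncard + D5.ncard := by
          have := Set.ncard_union_le ((D1 ∪ D2) ∪ {W}) D4; omega
      _ ≤ (D1 ∪ D2).ncard + 1 + D4.ncard + D5.ncard := by
          have := Set.ncard_union_le (D1 ∪ D2) ({W} : Set (Finset (Fin n)))
          have h2 : ({W} : Set (Finset (Fin n))).ncard = 1 := Set.ncard_singleton _
          omega
      _ ≤ D1.ncard + D2.ncard + 1 + D4.ncard + D5.ncard := by
          have := Set.ncard_union_le D1 D2; omega
  have := step1.trans step2
  omega
end

section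
/- Given a vertex-pendant appearance A of a rooted graph K• (with h+1 vertices, root r, and both K and K−r connected) in a graph G, the number of vertex-pendant appearances of K• in G that fail to be near-disjoint from A (including A itself) is at most h+1. Consequently, if G1 is formed from a graph G0 by attaching a new vertex-pendant copy of K• at a vertex of G0, then vpend(G1,K•) ≤ vpend(G0,K•) + h + 1. -/
/-- A vertex-pendant appearance of the rooted graph `K•` (root `r`) in `G` on the vertex set
`W` with distinguished vertex `w`: an isomorphism `K ≃ G[W]` sends `r` to `w`, and there are
no edges between `W \ {w}` and the rest of the graph. -/
def vpendApp {V : Type*} (G : SimpleGraph V) {h : ℕ} (K : SimpleGraph (Fin (h+1)))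
    (r : Fin (h+1)) (W : Finset V) (w : V) : Prop :=
  w ∈ W ∧ (∀ x ∈ W, x ≠ w → ∀ y, y ∉ W → ¬ G.Adj x y) ∧
    ∃ φ : K ≃g G.induce (W : Set V), (↑(φ r) : V) = w

/-- Two (distinct) vertex-pendant appearances are near-disjoint if their vertex sets are
disjoint, or their unique common vertex is their common root. -/
def NearDisjoint {V : Type*} (W1 : Finset V) (w1 : V) (W2 : Finset V) (w2 : V) : Prop :=
  (∀ x ∈ W1, x ∉ W2) ∨ (w1 = w2 ∧ ∀ x ∈ W1, x ∈ W2 → x = w1)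

/-- `vpend(G, K•)`: the number of vertex-pendant appearances of `K•` in `G`. -/
noncomputable def vpendCount {V : Type*} (G : SimpleGraph V) {h : ℕ}
    (K : SimpleGraph (Fin (h+1))) (r : Fin (h+1)) : ℕ :=
  Nat.card {p : Finset V × V // vpendApp G K r p.1 p.2}

section Aux
variable {V : Type*} {h : ℕ} {K : SimpleGraph (Fin (h+1))} {r : Fin (h+1)}

lemma vpend_closed {G : SimpleGraph V} {W : Finset V} {w : V}
    (hA : vpendApp G K r W w) {x y : V} (hx : x ∈ W) (hxw : x ≠ w)
    (hadj : G.Adj x y) : y ∈ W := by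
  by_contra hy; exact hA.2.1 x hx hxw y hy hadj

lemma vpend_card {G : SimpleGraph V} {W : Finset V} {w : V}
    (hA : vpendApp G K r W w) : W.card = h + 1 := by
  obtain ⟨_, _, φ, _⟩ := hA
  have h1 : Nat.card (Fin (h+1)) = Nat.card (↑(W : Set V)) := Nat.card_congr φ.toEquiv
  rw [Nat.card_eq_fintype_card, Fintype.card_fin, Nat.card_coe_set_eq,
    Set.ncard_coe_finset] at h1
  omega

lemma hr_pos (hKr : (K.induce ({r}ᶜ : Set (Fin (h+1)))).Connected) : 0 < h := by
  obtain ⟨⟨x, hx⟩⟩ := hKr.nonempty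
  rcases Nat.eq_zero_or_pos h with h0 | h1
  · subst h0
    exact absurd (Fin.ext (by omega)) hx
  · exact h1

lemma K_exists_adj (hK : K.Connected) (hh : 0 < h) (t : Fin (h+1)) : ∃ s, K.Adj t s := by
  obtain ⟨u, hu⟩ : ∃ u : Fin (h+1), u ≠ t :=
    Fintype.exists_ne_of_one_lt_card (by simp; omega) t
  obtain ⟨p⟩ := hK.preconnected t u
  cases p with
  | nil => exact absurd rfl hu
  | cons h' _ => exact ⟨_, h'⟩

lemma vpend_nbr (hK : K.Connected) (hh : 0 < h) {G : SimpleGraph V} {W : Finset V} {w : V}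
    (hA : vpendApp G K r W w) {v : V} (hv : v ∈ W) : ∃ u, u ∈ W ∧ G.Adj v u := by
  obtain ⟨_, _, φ, _⟩ := hA
  set t := φ.symm ⟨v, hv⟩ with ht
  obtain ⟨s, hs⟩ := K_exists_adj hK hh t
  have hadj : (G.induce (W : Set V)).Adj (φ t) (φ s) := φ.map_rel_iff.mpr hs
  have hv' : ((φ t : ↑(W : Set V)) : V) = v := by rw [ht, φ.apply_symm_apply]
  refine ⟨(φ s : V), Finset.mem_coe.mp (φ s).2, ?_⟩
  have : G.Adj ((φ t : ↑(W : Set V)) : V) ((φ s : ↑(W : Set V)) : V) := hadj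
  rwa [hv'] at this

/-- Key connectivity lemma: a property that propagates along `G`-edges inside `W \ {w}`
spreads from one non-root vertex of an appearance to all non-root vertices. -/
lemma vpend_spread (hKr : (K.induce ({r}ᶜ : Set (Fin (h+1)))).Connected)
    {G : SimpleGraph V} {W : Finset V} {w : V} (hA : vpendApp G K r W w)
    (X : V → Prop)
    (hcl : ∀ a, a ∈ W → a ≠ w → X a → ∀ b, b ∈ W → b ≠ w → G.Adj a b → X b)
    {u : V} (hu : u ∈ W) (huw : u ≠ w) (hXu : X u)
    {v : V} (hv : v ∈ W) (hvw : v ≠ w) : X v := by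
  obtain ⟨hwW, hpend, φ, hφ⟩ := hA
  -- non-root elements of `Fin (h+1)` map to non-root vertices
  have hne : ∀ (x : Fin (h+1)), x ≠ r → ((φ x : V) ≠ w) := by
    intro x hx heq
    exact hx (φ.toEquiv.injective (Subtype.ext (heq.trans hφ.symm)))
  -- a graph hom from `K - r` into `G` induced on `W \ {w}`
  let ψ : (K.induce ({r}ᶜ : Set (Fin (h+1)))) →g (G.induce ((↑W : Set V) \ {w})) :=
    { toFun := fun a => ⟨(φ a.1 : V), (φ a.1).2, hne a.1 a.2⟩,
      map_rel' := fun {a b} hab => φ.map_rel_iff.mpr hab }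
  -- walk induction
  have key : ∀ (c d : ↥((↑W : Set V) \ {w})), (G.induce ((↑W : Set V) \ {w})).Walk c d →
      X c.1 → X d.1 := by
    intro c d p
    induction p with
    | nil => exact id
    | @cons c m d hadj p ih =>
      intro hXc
      exact ih (hcl c.1 (Finset.mem_coe.mp c.2.1) c.2.2 hXc m.1
        (Finset.mem_coe.mp m.2.1) m.2.2 hadj)
  -- points in the domain
  have huW : u ∈ (W : Set V) := hu
  have hvW : v ∈ (W : Set V) := hv
  set xu : ↥({r}ᶜ : Set (Fin (h+1))) :=
    ⟨φ.symm ⟨u, huW⟩, fun hx => huw (by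
      have : φ (φ.symm ⟨u, huW⟩) = φ r := congrArg φ (by exact hx)
      rw [φ.apply_symm_apply] at this
      exact (congrArg Subtype.val this).trans hφ)⟩ with hxu
  set xv : ↥({r}ᶜ : Set (Fin (h+1))) :=
    ⟨φ.symm ⟨v, hvW⟩, fun hx => hvw (by
      have : φ (φ.symm ⟨v, hvW⟩) = φ r := congrArg φ (by exact hx)
      rw [φ.apply_symm_apply] at this
      exact (congrArg Subtype.val this).trans hφ)⟩ with hxv
  obtain ⟨p⟩ := hKr.preconnected xu xv
  have h1 : ((φ (φ.symm ⟨u, huW⟩) : ↑(W : Set V)) : V) = u := by rw [φ.apply_symm_apply]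
  have h2 : ((φ (φ.symm ⟨v, hvW⟩) : ↑(W : Set V)) : V) = v := by rw [φ.apply_symm_apply]
  have hmapu : ((ψ xu : ↥((↑W : Set V) \ {w})) : V) = u := h1
  have hmapv : ((ψ xv : ↥((↑W : Set V) \ {w})) : V) = v := h2
  have := key (ψ xu) (ψ xv) (p.map ψ) (by rwa [hmapu])
  rwa [hmapv] at this

lemma vpend_main [DecidableEq V] (hK : K.Connected)
    (hKr : (K.induce ({r}ᶜ : Set (Fin (h+1)))).Connected)
    {G : SimpleGraph V} {W1 : Finset V} {w1 : V} {W2 : Finset V} {w2 : V}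
    (hA : vpendApp G K r W1 w1) (hB : vpendApp G K r W2 w2)
    (hbad : ¬ NearDisjoint W1 w1 W2 w2) :
    w2 ∈ W1 ∧ ((W2 = W1 ∧ w2 = w1) ∨ (w1 ∈ W2 ∧ w1 ≠ w2)) := by
  have hh : 0 < h := hr_pos hKr
  have hcard1 := vpend_card hA
  have hcard2 := vpend_card hB
  rw [NearDisjoint, not_or] at hbad
  obtain ⟨hbad1, hbad2⟩ := hbad
  push_neg at hbad1 hbad2
  by_cases hw1 : w1 ∈ W2 ∧ w1 ≠ w2
  · refine ⟨?_, Or.inr hw1⟩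
    by_contra hw2
    obtain ⟨m, hmW1, hm⟩ := vpend_nbr hK hh hA hA.1
    have hmw1 : m ≠ w1 := hm.ne'
    have hmW2 : m ∈ W2 := vpend_closed hB hw1.1 hw1.2 hm
    have hsub : ∀ v ∈ W1, v ≠ w1 → v ∈ W2 := by
      intro v hv hvw
      exact vpend_spread hKr hA (· ∈ W2)
        (fun a haW1 _ haW2 b _ _ hab =>
          vpend_closed hB haW2 (fun he => hw2 (he ▸ haW1)) hab)
        hmW1 hmw1 hmW2 hv hvw
    have hW12 : W1 ⊆ W2 := by
      intro x hx
      by_cases hxw : x = w1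
      · exact hxw ▸ hw1.1
      · exact hsub x hx hxw
    have heq : W1 = W2 := Finset.eq_of_subset_of_card_le hW12 (by omega)
    exact hw2 (heq ▸ hB.1)
  · by_cases hex : ∃ u, u ∈ W2 ∧ u ≠ w2 ∧ u ∈ W1
    · obtain ⟨u, huW2, huw2, huW1⟩ := hex
      have hsub : ∀ v ∈ W2, v ≠ w2 → v ∈ W1 := by
        intro v hv hvw
        refine vpend_spread hKr hB (· ∈ W1) ?_ huW2 huw2 huW1 hv hvw
        intro a haW2 haw2 haW1 b _ _ hab
        have haw1 : a ≠ w1 := fun he => hw1 (he ▸ ⟨haW2, haw2⟩)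
        exact vpend_closed hA haW1 haw1 hab
      have hw2W1 : w2 ∈ W1 := by
        obtain ⟨n, hnW2, hn⟩ := vpend_nbr hK hh hB hB.1
        have hnw2 : n ≠ w2 := hn.ne'
        have hnW1 : n ∈ W1 := hsub n hnW2 hnw2
        have hnw1 : n ≠ w1 := fun he => hw1 (he ▸ ⟨hnW2, hnw2⟩)
        exact vpend_closed hA hnW1 hnw1 hn.symm
      have hW21 : W2 ⊆ W1 := by
        intro x hx
        by_cases hxw : x = w2
        · exact hxw ▸ hw2W1
        · exact hsub x hx hxw
      have hWeq : W2 = W1 := Finset.eq_of_subset_of_card_le hW21 (by omega)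
      have hww : w2 = w1 := by
        by_contra hne
        exact hw1 ⟨hWeq ▸ hA.1, fun he => hne he.symm⟩
      exact ⟨hw2W1, Or.inl ⟨hWeq, hww⟩⟩
    · push_neg at hex
      exfalso
      obtain ⟨x, hxW1, hxW2⟩ := hbad1
      have hxw2 : x = w2 := by
        by_contra hne
        exact hex x hxW2 hne hxW1
      have hw2W1 : w2 ∈ W1 := hxw2 ▸ hxW1
      by_cases hww : w1 = w2
      · obtain ⟨y, hyW1, hyW2, hyw1⟩ := hbad2 hww
        exact hex y hyW2 (fun he => hyw1 (by rw [he, ← hww])) hyW1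
      · obtain ⟨n, hnW2, hn⟩ := vpend_nbr hK hh hB hB.1
        have hnW1 : n ∈ W1 := vpend_closed hA hw2W1 (Ne.symm hww) hn
        exact hex n hnW2 hn.ne' hnW1

lemma vpend_uniq [DecidableEq V]
    (hKr : (K.induce ({r}ᶜ : Set (Fin (h+1)))).Connected)
    {G : SimpleGraph V} {W2 : Finset V} {w2 : V} {W2' : Finset V}
    (hB : vpendApp G K r W2 w2) (hB' : vpendApp G K r W2' w2)
    {u : V} (hu2 : u ∈ W2) (huw : u ≠ w2) (hu2' : u ∈ W2') : W2 = W2' := by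
  have hsub : ∀ {Wa Wb : Finset V}, vpendApp G K r Wa w2 → vpendApp G K r Wb w2 →
      u ∈ Wa → u ∈ Wb → Wa ⊆ Wb := by
    intro Wa Wb ha hb hua hub x hx
    by_cases hxw : x = w2
    · exact hxw ▸ hb.1
    · refine vpend_spread hKr ha (· ∈ Wb) ?_ hua huw hub hx hxw
      intro a _ haw2 haWb b _ _ hab
      exact vpend_closed hb haWb haw2 hab
  exact Finset.Subset.antisymm (hsub hB hB' hu2 hu2') (hsub hB' hB hu2' hu2)

lemma vpend_part1 [DecidableEq V] (hK : K.Connected)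
    (hKr : (K.induce ({r}ᶜ : Set (Fin (h+1)))).Connected)
    {G : SimpleGraph V} {W : Finset V} {w : V} (hA : vpendApp G K r W w) :
    Nat.card {p : Finset V × V // vpendApp G K r p.1 p.2 ∧
      (p = (W, w) ∨ ¬ NearDisjoint W w p.1 p.2)} ≤ h + 1 := by
  classical
  have key : ∀ (p : Finset V × V), vpendApp G K r p.1 p.2 →
      (p = (W, w) ∨ ¬ NearDisjoint W w p.1 p.2) →
      p.2 ∈ W ∧ (p = (W, w) ∨ (w ∈ p.1 ∧ w ≠ p.2)) := by
    rintro ⟨W2, w2⟩ hp hcond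
    rcases hcond with he | hnd
    · exact ⟨(by rw [he]; exact hA.1), Or.inl he⟩
    · obtain ⟨h1, h2⟩ := vpend_main hK hKr hA hp hnd
      refine ⟨h1, ?_⟩
      rcases h2 with ⟨hW, hw⟩ | h2
      · exact Or.inl (Prod.ext hW hw)
      · exact Or.inr h2
  let f : {p : Finset V × V // vpendApp G K r p.1 p.2 ∧
      (p = (W, w) ∨ ¬ NearDisjoint W w p.1 p.2)} → {x // x ∈ W} :=
    fun p => ⟨p.1.2, (key p.1 p.2.1 p.2.2).1⟩
  have hinj : Function.Injective f := by
    rintro ⟨p, hp⟩ ⟨q, hq⟩ hfe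
    have he : p.2 = q.2 := congrArg Subtype.val hfe
    have kp := (key p hp.1 hp.2).2
    have kq := (key q hq.1 hq.2).2
    apply Subtype.ext
    show p = q
    rcases kp with hpA | ⟨hwp, hwp2⟩
    · rcases kq with hqA | ⟨hwq, hwq2⟩
      · rw [hpA, hqA]
      · exfalso; apply hwq2; rw [← he, hpA]
    · rcases kq with hqA | ⟨hwq, hwq2⟩
      · exfalso; apply hwp2; rw [he, hqA]
      · have hB' : vpendApp G K r q.1 p.2 := he ▸ hq.1
        have hW : p.1 = q.1 := vpend_uniq hKr hp.1 hB' hwp hwp2 hwq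
        exact Prod.ext hW he
  calc Nat.card {p : Finset V × V // vpendApp G K r p.1 p.2 ∧
      (p = (W, w) ∨ ¬ NearDisjoint W w p.1 p.2)}
      ≤ Nat.card {x // x ∈ W} := Nat.card_le_card_of_injective f hinj
    _ = h + 1 := by rw [Nat.card_eq_fintype_card, Fintype.card_coe, vpend_card hA]

lemma vpend_transfer [DecidableEq V] (G1 : SimpleGraph V) (W : Finset V) (w : V)
    {W2 : Finset V} {w2 : V} (hB : vpendApp G1 K r W2 w2)
    (hnd : NearDisjoint W w W2 w2) : vpendApp (isolate G1 (W.erase w)) K r W2 w2 := by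
  have hdisj : ∀ x ∈ W2, x ∉ W.erase w := by
    intro x hx hxE
    rw [Finset.mem_erase] at hxE
    rcases hnd with h1 | ⟨hww, h2⟩
    · exact h1 x hxE.2 hx
    · exact hxE.1 (h2 x hxE.2 hx)
  obtain ⟨hw2, hpend, φ, hφ⟩ := hB
  refine ⟨hw2, ?_, ?_⟩
  · intro x hx hxw y hy hadj
    exact hpend x hx hxw y hy hadj.1
  · let ι : G1.induce (↑W2 : Set V) ≃g (isolate G1 (W.erase w)).induce (↑W2 : Set V) :=
      { toEquiv := Equiv.refl _,
        map_rel_iff' := by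
          intro a b
          constructor
          · exact fun hab => hab.1
          · exact fun hab => ⟨hab, hdisj a.1 (Finset.mem_coe.mp a.2),
              hdisj b.1 (Finset.mem_coe.mp b.2)⟩ }
    exact ⟨φ.trans ι, hφ⟩

end Aux

/-- for a vertex-pendant appearance `A = (W, w)` of `K•` in `G`, the number of
vertex-pendant appearances of `K•` in `G` failing to be near-disjoint from `A` (including `A`)
is at most `h + 1`; consequently, if `G1` is formed by attaching a new vertex-pendant copy of
`K•` at a vertex of `G0` (equivalently, `G0 = G1` minus the non-root vertices of such a copy),
then `vpend(G1, K•) ≤ vpend(G0, K•) + h + 1`. -/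
theorem stmt2 {V : Type*} [Fintype V] [DecidableEq V] (h : ℕ)
    (K : SimpleGraph (Fin (h+1))) (r : Fin (h+1))
    (hK : K.Connected) (hKr : (K.induce ({r}ᶜ : Set (Fin (h+1)))).Connected) :
    (∀ (G : SimpleGraph V) (W : Finset V) (w : V), vpendApp G K r W w →
      Nat.card {p : Finset V × V // vpendApp G K r p.1 p.2 ∧
        (p = (W, w) ∨ ¬ NearDisjoint W w p.1 p.2)} ≤ h + 1) ∧
    (∀ (G1 : SimpleGraph V) (W : Finset V) (w : V), vpendApp G1 K r W w →
      vpendCount G1 K r ≤ vpendCount (isolate G1 (W.erase w)) K r + h + 1) := by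
  constructor
  · intro G W w hA
    exact vpend_part1 hK hKr hA
  · intro G1 W w hA
    classical
    set G0 := isolate G1 (W.erase w) with hG0
    let g : {p : Finset V × V // vpendApp G1 K r p.1 p.2} →
        {p : Finset V × V // vpendApp G0 K r p.1 p.2} ⊕
        {p : Finset V × V // vpendApp G1 K r p.1 p.2 ∧
          (p = (W, w) ∨ ¬ NearDisjoint W w p.1 p.2)} :=
      fun p => if hc : (p : Finset V × V) = (W, w) ∨ ¬ NearDisjoint W w (p : Finset V × V).1 (p : Finset V × V).2
        then Sum.inr ⟨p.1, p.2, hc⟩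
        else Sum.inl ⟨p.1, vpend_transfer G1 W w p.2 (not_not.mp (not_or.mp hc).2)⟩
    have hinj : Function.Injective g := by
      intro p q he
      unfold g at he
      split_ifs at he with h1 h2 h2 <;>
        simp only [Sum.inr.injEq, Sum.inl.injEq, Subtype.mk.injEq, reduceCtorEq] at he <;>
        exact Subtype.ext he
    have hle := Nat.card_le_card_of_injective g hinj
    rw [Nat.card_sum] at hle
    have hbad := vpend_part1 hK hKr hA
    have e1 : vpendCount G1 K r =
        Nat.card {p : Finset V × V // vpendApp G1 K r p.1 p.2} := rfl
    have e0 : vpendCount G0 K r =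
        Nat.card {p : Finset V × V // vpendApp G0 K r p.1 p.2} := rfl
    omega
end

section
/- Let A be a set of graphs and C a class of connected graphs each of which is bridge-addable in A. Then for R_n sampled uniformly from the graphs in A on vertex set [n], the expected number of vertices in the components of Frag(R_n) belonging to C satisfies E[frag(R_n,C)] < 2. -/
/-- Add the edge `uv` to `G`. -/
def addEdge {V : Type*} (G : SimpleGraph V) (u v : V) : SimpleGraph V :=
  G ⊔ SimpleGraph.fromEdgeSet {s(u, v)}

/-- The component of `v` in `G`, as a graph. -/
abbrev compGraph {n : ℕ} (G : SimpleGraph (Fin n)) (v : Fin n) :=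
  G.induce (G.connectedComponentMk v).supp

/-- `frag(G, C)` relative to the choice `c0` of a (largest) component: the number of vertices
of the fragment lying in components belonging to `C`. -/
noncomputable def fragC {n : ℕ} (G : SimpleGraph (Fin n))
    (C : ∀ m : ℕ, Set (SimpleGraph (Fin m))) (c0 : G.ConnectedComponent) : ℕ :=
  Nat.card {v : Fin n // G.connectedComponentMk v ≠ c0 ∧ memClass C (compGraph G v)}

/-! Auxiliary material for the proof. -/

open Finset

private lemma sup_sdiff_fromEdgeSet_eq {V : Type*} (G : SimpleGraph V) (e : Sym2 V)
    (he : e ∉ G.edgeSet) :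
    (G ⊔ SimpleGraph.fromEdgeSet {e}) \ SimpleGraph.fromEdgeSet {e} = G := by
  ext a b
  simp only [SimpleGraph.sdiff_adj, SimpleGraph.sup_adj, SimpleGraph.fromEdgeSet_adj,
    Set.mem_singleton_iff]
  constructor
  · rintro ⟨h1 | h1, h2⟩
    · exact h1
    · exact absurd h1 h2
  · intro h
    refine ⟨Or.inl h, fun hc => he ?_⟩
    rw [← hc.1]
    exact h

/-- If `a` can reach `b` in `G` but not in `G` minus the edge `s(u,v)`, then `a` can reach
`u` or `v` in `G` minus that edge. -/
private lemma reach_endpoint {V : Type*} (G : SimpleGraph V) (u v : V) :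
    ∀ {a b : V}, (p : G.Walk a b) →
      ¬(G \ SimpleGraph.fromEdgeSet {s(u,v)}).Reachable a b →
      ((G \ SimpleGraph.fromEdgeSet {s(u,v)}).Reachable a u ∨
       (G \ SimpleGraph.fromEdgeSet {s(u,v)}).Reachable a v) := by
  intro a b p
  induction p with
  | nil => exact fun hn => absurd (SimpleGraph.Reachable.refl _) hn
  | @cons a c b h q ih =>
    intro hn
    by_cases he : s(a, c) = s(u, v)
    · rw [Sym2.eq_iff] at he
      rcases he with ⟨rfl, rfl⟩ | ⟨rfl, rfl⟩
      · exact Or.inl (SimpleGraph.Reachable.refl _)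
      · exact Or.inr (SimpleGraph.Reachable.refl _)
    · have hadj : (G \ SimpleGraph.fromEdgeSet {s(u,v)}).Adj a c := by
        simp only [SimpleGraph.sdiff_adj, SimpleGraph.fromEdgeSet_adj, Set.mem_singleton_iff]
        exact ⟨h, fun hc => he hc.1⟩
      have hnc : ¬(G \ SimpleGraph.fromEdgeSet {s(u,v)}).Reachable c b :=
        fun hr => hn (hadj.reachable.trans hr)
      rcases ih hnc with h1 | h1
      · exact Or.inl (hadj.reachable.trans h1)
      · exact Or.inr (hadj.reachable.trans h1)

open Classical in
/-- The set of bridges of `G`. -/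
private noncomputable def bridgeSet {n : ℕ} (G : SimpleGraph (Fin n)) : Finset (Sym2 (Fin n)) :=
  Finset.univ.filter (fun e => e ∈ G.edgeSet ∧ G.IsBridge e)

open Classical in
private lemma mem_bridgeSet_iff {n : ℕ} (G : SimpleGraph (Fin n)) (e : Sym2 (Fin n)) :
    e ∈ bridgeSet G ↔ e ∈ G.edgeSet ∧ G.IsBridge e := by
  simp [bridgeSet]

/-- the root of the component of `x` -/
private noncomputable def groot {n : ℕ} (G : SimpleGraph (Fin n)) (x : Fin n) : Fin n :=
  (G.connectedComponentMk x).out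

private lemma groot_mk_eq {n : ℕ} (G : SimpleGraph (Fin n)) (x : Fin n) :
    G.connectedComponentMk (groot G x) = G.connectedComponentMk x :=
  (G.connectedComponentMk x).out_eq

/-- A graph on `n ≥ 1` vertices has at most `n - 1` bridges. -/
private lemma bridge_card_le {n : ℕ} (hn : 0 < n) (G : SimpleGraph (Fin n)) :
    (bridgeSet G).card ≤ n - 1 := by
  classical
  set D : Sym2 (Fin n) → SimpleGraph (Fin n) := fun e => G \ SimpleGraph.fromEdgeSet {e} with hD
  set P : Sym2 (Fin n) → Fin n → Prop :=
    fun e x => x ∈ e ∧ ¬(D e).Reachable (groot G x) x with hP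
  set f : Sym2 (Fin n) → Fin n :=
    fun e => if h : ∃ x, P e x then h.choose else ⟨0, hn⟩ with hf
  have hfP : ∀ e, e ∈ G.edgeSet ∧ G.IsBridge e → P e (f e) := by
    intro e hb
    have hex : ∃ x, P e x := by
      induction e using Sym2.ind with
      | _ u v =>
        rw [SimpleGraph.isBridge_iff, SimpleGraph.mem_edgeSet] at hb
        have hmkuv : G.connectedComponentMk u = G.connectedComponentMk v :=
          SimpleGraph.ConnectedComponent.connectedComponentMk_eq_of_adj hb.1
        by_cases h1 : (D s(u,v)).Reachable (groot G u) u
        · refine ⟨v, Sym2.mem_mk_right u v, fun h2 => hb.2 ?_⟩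
          have hgv : groot G v = groot G u := by rw [groot, groot, hmkuv]
          rw [hgv] at h2
          exact h1.symm.trans h2
        · exact ⟨u, Sym2.mem_mk_left u v, h1⟩
    simp only [hf, hex, dif_pos]
    exact hex.choose_spec
  have hroot_fix : ∀ x : Fin n, groot G (groot G x) = groot G x := by
    intro x
    exact congrArg Quot.out (groot_mk_eq G x)
  set r0 : Fin n := groot G ⟨0, hn⟩ with hr0
  have hcard : (Finset.univ.erase r0).card = n - 1 := by
    rw [Finset.card_erase_of_mem (mem_univ _), card_univ, Fintype.card_fin]
  rw [← hcard]
  apply Finset.card_le_card_of_injOn f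
  · -- maps to univ.erase r0
    intro e he
    rw [Finset.mem_coe, mem_bridgeSet_iff] at he
    have hspec := hfP e he
    refine Finset.mem_erase.mpr ⟨?_, mem_univ _⟩
    intro hfe
    apply hspec.2
    have : groot G (f e) = f e := by rw [hfe, hr0, hroot_fix]
    rw [this]
  · -- injective
    intro e1 he1 e2 he2 hfe
    rw [Finset.mem_coe, mem_bridgeSet_iff] at he1 he2
    have hs1 := hfP e1 he1
    have hs2 := hfP e2 he2
    rw [hfe] at hs1
    obtain ⟨x, hx⟩ : ∃ x, f e2 = x := ⟨f e2, rfl⟩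
    rw [hx] at hs1 hs2
    obtain ⟨v1, rfl⟩ := Sym2.mem_iff_exists.mp hs1.1
    obtain ⟨v2, rfl⟩ := Sym2.mem_iff_exists.mp hs2.1
    by_contra hne
    rw [SimpleGraph.isBridge_iff, SimpleGraph.mem_edgeSet] at he1
    have hrx : G.Reachable (groot G x) x :=
      SimpleGraph.ConnectedComponent.eq.mp (groot_mk_eq G x)
    obtain ⟨p⟩ := hrx
    have h1 : (D s(x, v1)).Reachable (groot G x) v1 := by
      rcases reach_endpoint G x v1 p hs1.2 with h | h
      · exact absurd h hs1.2
      · exact h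
    obtain ⟨P⟩ := h1
    by_cases hmem : s(x, v2) ∈ P.edges
    · exact hs1.2 ⟨P.takeUntil x (P.fst_mem_support_of_mem_edges hmem)⟩
    · have hPedges : ∀ e ∈ P.edges, e ∈ (D s(x, v2)).edgeSet := by
        intro e heP
        have h1' : e ∈ (D s(x, v1)).edgeSet := P.edges_subset_edgeSet heP
        rw [hD] at h1' ⊢
        simp only [SimpleGraph.edgeSet_sdiff, SimpleGraph.edgeSet_fromEdgeSet, Set.mem_diff,
          Set.mem_diff, Set.mem_singleton_iff, Set.mem_setOf_eq, not_and, not_not] at h1' ⊢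
        refine ⟨h1'.1, fun hc => ?_⟩
        exact absurd (hc ▸ heP) hmem
      have hQ : (D s(x, v2)).Reachable (groot G x) v1 := ⟨P.transfer _ hPedges⟩
      have hadj2 : (D s(x, v2)).Adj v1 x := by
        simp only [hD, SimpleGraph.sdiff_adj, SimpleGraph.fromEdgeSet_adj, Set.mem_singleton_iff]
        refine ⟨he1.1.symm, fun hc => hne ?_⟩
        rw [← hc.1, Sym2.eq_swap]
      exact hs2.2 (hQ.trans hadj2.reachable)

/-- Auxiliary graph whose edges are the pairs lying in distinct components of `G`, one of
whose components belongs to the class `C`. -/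
private def HG {n : ℕ} (C : ∀ m : ℕ, Set (SimpleGraph (Fin m))) (G : SimpleGraph (Fin n)) :
    SimpleGraph (Fin n) :=
  SimpleGraph.fromRel
    (fun a b => G.connectedComponentMk a ≠ G.connectedComponentMk b ∧ memClass C (compGraph G a))

open Classical in
private lemma card_supp_eq {n : ℕ} (G : SimpleGraph (Fin n)) (c : G.ConnectedComponent) :
    Nat.card c.supp =
      (Finset.univ.filter (fun w => G.connectedComponentMk w = c)).card := by
  classical
  rw [Nat.card_eq_fintype_card]
  rw [Fintype.card_subtype]
  congr 1
  apply Finset.filter_congr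
  intro x _
  simp [SimpleGraph.ConnectedComponent.mem_supp_iff]

open Classical in
private lemma lower_bound {n : ℕ} (C : ∀ m : ℕ, Set (SimpleGraph (Fin m)))
    (G : SimpleGraph (Fin n)) (c0 : G.ConnectedComponent)
    (hb : ∀ c : G.ConnectedComponent, Nat.card c.supp ≤ Nat.card c0.supp) :
    fragC G C c0 * n ≤ 2 * (HG C G).edgeFinset.card := by
  classical
  set K : Finset (Fin n) :=
    Finset.univ.filter (fun v => G.connectedComponentMk v ≠ c0 ∧ memClass C (compGraph G v))
    with hKdef
  set B : Finset (Fin n) :=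
    Finset.univ.filter (fun v => G.connectedComponentMk v = c0) with hBdef
  have hK : fragC G C c0 = K.card := by
    rw [fragC, Nat.card_eq_fintype_card, Fintype.card_subtype]
  have hBcard : B.card = Nat.card c0.supp := by rw [card_supp_eq]
  have hbn : B.card ≤ n := by
    calc B.card ≤ (Finset.univ : Finset (Fin n)).card := card_le_card (subset_univ _)
    _ = n := by rw [card_univ, Fintype.card_fin]
  have hdisj : Disjoint K B := by
    rw [Finset.disjoint_left]
    intro a ha hb'
    rw [hKdef, mem_filter] at ha
    rw [hBdef, mem_filter] at hb'
    exact ha.2.1 hb'.2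
  have hdegK : ∀ v ∈ K, n - B.card ≤ (HG C G).degree v := by
    intro v hv
    rw [hKdef, mem_filter] at hv
    rw [← SimpleGraph.card_neighborFinset_eq_degree, SimpleGraph.neighborFinset_eq_filter]
    have hsub : Finset.univ.filter
        (fun w => G.connectedComponentMk w ≠ G.connectedComponentMk v) ⊆
        Finset.univ.filter ((HG C G).Adj v) := by
      intro w hw
      rw [mem_filter] at hw ⊢
      refine ⟨mem_univ _, ?_⟩
      rw [HG, SimpleGraph.fromRel_adj]
      exact ⟨fun hvw => hw.2 (by rw [hvw]), Or.inl ⟨fun h => hw.2 h.symm, hv.2.2⟩⟩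
    refine le_trans ?_ (card_le_card hsub)
    have : Finset.univ.filter
        (fun w => G.connectedComponentMk w ≠ G.connectedComponentMk v) =
        Finset.univ \ Finset.univ.filter
          (fun w => G.connectedComponentMk w = G.connectedComponentMk v) := by
      rw [Finset.filter_not]
    rw [this, Finset.card_sdiff_of_subset (filter_subset _ _), card_univ, Fintype.card_fin]
    apply Nat.sub_le_sub_left
    calc (Finset.univ.filter
        (fun w => G.connectedComponentMk w = G.connectedComponentMk v)).card
        = Nat.card (G.connectedComponentMk v).supp := (card_supp_eq G _).symm
      _ ≤ Nat.card c0.supp := hb _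
      _ = B.card := hBcard.symm
  have hdegB : ∀ v ∈ B, K.card ≤ (HG C G).degree v := by
    intro v hv
    rw [hBdef, mem_filter] at hv
    rw [← SimpleGraph.card_neighborFinset_eq_degree, SimpleGraph.neighborFinset_eq_filter]
    apply card_le_card
    intro u hu
    rw [hKdef, mem_filter] at hu
    rw [mem_filter]
    refine ⟨mem_univ _, ?_⟩
    rw [HG, SimpleGraph.fromRel_adj]
    have hne : G.connectedComponentMk u ≠ G.connectedComponentMk v := by
      rw [hv.2]; exact hu.2.1
    exact ⟨fun h => hne (by rw [h]), Or.inr ⟨hne, hu.2.2⟩⟩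
  have hsum : K.card * (n - B.card) + B.card * K.card ≤ ∑ v, (HG C G).degree v := by
    calc K.card * (n - B.card) + B.card * K.card
        ≤ (∑ v ∈ K, (HG C G).degree v) + ∑ v ∈ B, (HG C G).degree v := by
          apply add_le_add
          · calc K.card * (n - B.card) = K.card • (n - B.card) := (smul_eq_mul _ _).symm
              _ ≤ ∑ v ∈ K, (HG C G).degree v := Finset.card_nsmul_le_sum _ _ _ hdegK
          · calc B.card * K.card = B.card • K.card := (smul_eq_mul _ _).symm
              _ ≤ ∑ v ∈ B, (HG C G).degree v := Finset.card_nsmul_le_sum _ _ _ hdegB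
      _ = ∑ v ∈ K ∪ B, (HG C G).degree v := (Finset.sum_union hdisj).symm
      _ ≤ ∑ v, (HG C G).degree v :=
          Finset.sum_le_sum_of_subset (subset_univ _)
  rw [hK]
  calc K.card * n = K.card * ((n - B.card) + B.card) := by rw [Nat.sub_add_cancel hbn]
    _ = K.card * (n - B.card) + B.card * K.card := by ring
    _ ≤ ∑ v, (HG C G).degree v := hsum
    _ = 2 * (HG C G).edgeFinset.card := SimpleGraph.sum_degrees_eq_twice_card_edges _

private lemma HG_mk_ne {n : ℕ} (C : ∀ m : ℕ, Set (SimpleGraph (Fin m)))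
    (G : SimpleGraph (Fin n)) (u v : Fin n) (he : (HG C G).Adj u v) :
    G.connectedComponentMk u ≠ G.connectedComponentMk v := by
  rw [HG, SimpleGraph.fromRel_adj] at he
  rcases he.2 with h | h
  · exact h.1
  · exact fun hc => h.1 hc.symm

private lemma HG_not_mem {n : ℕ} (C : ∀ m : ℕ, Set (SimpleGraph (Fin m)))
    (G : SimpleGraph (Fin n)) (e : Sym2 (Fin n)) (he : e ∈ (HG C G).edgeSet) :
    e ∉ G.edgeSet := by
  revert he
  induction e using Sym2.ind with
  | _ u v =>
    intro he hadj
    rw [SimpleGraph.mem_edgeSet] at he hadj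
    exact HG_mk_ne C G u v he
      (SimpleGraph.ConnectedComponent.connectedComponentMk_eq_of_adj hadj)

open Classical in
private lemma sum_HG_le {n : ℕ} (C : ∀ m : ℕ, Set (SimpleGraph (Fin m)))
    (𝒜 : Finset (SimpleGraph (Fin n)))
    (hAdd : ∀ G ∈ 𝒜, ∀ u v : Fin n,
      G.connectedComponentMk u ≠ G.connectedComponentMk v →
      memClass C (compGraph G u) → addEdge G u v ∈ 𝒜) :
    ∑ G ∈ 𝒜, (HG C G).edgeFinset.card ≤ ∑ G ∈ 𝒜, (bridgeSet G).card := by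
  classical
  rw [← Finset.card_sigma, ← Finset.card_sigma]
  apply Finset.card_le_card_of_injOn
    (fun p => ⟨p.1 ⊔ SimpleGraph.fromEdgeSet {p.2}, p.2⟩)
  · -- maps to
    rintro ⟨G, e⟩ hp
    rw [Finset.mem_coe, Finset.mem_sigma] at hp
    obtain ⟨hG, he⟩ := hp
    rw [SimpleGraph.mem_edgeFinset] at he
    rw [Finset.mem_coe, Finset.mem_sigma]
    have hnG : e ∉ G.edgeSet := HG_not_mem C G e he
    revert he hnG
    induction e using Sym2.ind with
    | _ u v =>
      intro he hnG
      have he' := he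
      rw [SimpleGraph.mem_edgeSet, HG, SimpleGraph.fromRel_adj] at he'
      constructor
      · -- the new graph is in 𝒜
        rcases he'.2 with h | h
        · exact hAdd G hG u v h.1 h.2
        · have : addEdge G v u = G ⊔ SimpleGraph.fromEdgeSet {s(u, v)} := by
            rw [addEdge, Sym2.eq_swap]
          exact (this ▸ hAdd G hG v u h.1 h.2 : G ⊔ SimpleGraph.fromEdgeSet {s(u, v)} ∈ 𝒜)
      · -- it is a bridge
        rw [mem_bridgeSet_iff, SimpleGraph.isBridge_iff, SimpleGraph.mem_edgeSet]
        constructor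
        · exact Or.inr ((SimpleGraph.fromEdgeSet_adj _).mpr ⟨rfl, he'.1⟩)
        · rw [SimpleGraph.deleteEdges, sup_sdiff_fromEdgeSet_eq G _ hnG]
          intro hr
          exact HG_mk_ne C G u v ((SimpleGraph.mem_edgeSet _).mp he)
            (SimpleGraph.ConnectedComponent.eq.mpr hr)
  · -- injective
    rintro ⟨G1, e1⟩ hp1 ⟨G2, e2⟩ hp2 heq
    simp only [Finset.coe_sigma, Set.mem_sigma_iff, Finset.mem_coe, SimpleGraph.mem_edgeFinset]
      at hp1 hp2
    have he : e1 = e2 := congrArg (fun p => p.2) heq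
    subst he
    have h1 : G1 ⊔ SimpleGraph.fromEdgeSet {e1} = G2 ⊔ SimpleGraph.fromEdgeSet {e1} :=
      congrArg (fun p => p.1) heq
    have hG : G1 = G2 := by
      have k1 := sup_sdiff_fromEdgeSet_eq G1 e1 (HG_not_mem C G1 e1 hp1.2)
      have k2 := sup_sdiff_fromEdgeSet_eq G2 e1 (HG_not_mem C G2 e1 hp2.2)
      rw [← k1, ← k2, h1]
    subst hG
    rfl

open Classical in
private lemma key_count {n : ℕ} (hn : 0 < n) (C : ∀ m : ℕ, Set (SimpleGraph (Fin m)))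
    (𝒜 : Finset (SimpleGraph (Fin n)))
    (hAdd : ∀ G ∈ 𝒜, ∀ u v : Fin n,
      G.connectedComponentMk u ≠ G.connectedComponentMk v →
      memClass C (compGraph G u) → addEdge G u v ∈ 𝒜)
    (big : ∀ G : SimpleGraph (Fin n), G.ConnectedComponent)
    (hbig : ∀ (G : SimpleGraph (Fin n)) (c : G.ConnectedComponent),
      Nat.card c.supp ≤ Nat.card (big G).supp) :
    (∑ G ∈ 𝒜, fragC G C (big G)) * n ≤ 2 * ((n - 1) * 𝒜.card) := by
  calc (∑ G ∈ 𝒜, fragC G C (big G)) * n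
      = ∑ G ∈ 𝒜, fragC G C (big G) * n := by rw [Finset.sum_mul]
    _ ≤ ∑ G ∈ 𝒜, 2 * (HG C G).edgeFinset.card :=
        Finset.sum_le_sum (fun G _ => lower_bound C G (big G) (hbig G))
    _ = 2 * ∑ G ∈ 𝒜, (HG C G).edgeFinset.card := by rw [Finset.mul_sum]
    _ ≤ 2 * ∑ G ∈ 𝒜, (bridgeSet G).card :=
        Nat.mul_le_mul_left _ (sum_HG_le C 𝒜 hAdd)
    _ ≤ 2 * ((n - 1) * 𝒜.card) := by
        apply Nat.mul_le_mul_left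
        calc ∑ G ∈ 𝒜, (bridgeSet G).card ≤ ∑ _G ∈ 𝒜, (n - 1) :=
              Finset.sum_le_sum (fun G _ => bridge_card_le hn G)
          _ = (n - 1) * 𝒜.card := by rw [Finset.sum_const, smul_eq_mul, mul_comm]

/-- if every graph of `C` (a class of connected graphs) is bridge-addable in `A`,
then `E[frag(R_n, C)] < 2` for `R_n` uniform on the (nonempty, finite) set `A_n` of graphs of
`A` on `[n]`; expectation is the average over `A_n`. The largest component of each graph is
selected by an arbitrary function `big` (breaking ties in some way). -/
theorem stmt4 (n : ℕ) (𝒜 : Finset (SimpleGraph (Fin n))) (hne : 𝒜.Nonempty)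
    (C : ∀ m : ℕ, Set (SimpleGraph (Fin m)))
    (hCconn : ∀ m, ∀ H ∈ C m, SimpleGraph.Connected H)
    (hAdd : ∀ G ∈ 𝒜, ∀ u v : Fin n,
      G.connectedComponentMk u ≠ G.connectedComponentMk v →
      memClass C (compGraph G u) → addEdge G u v ∈ 𝒜)
    (big : ∀ G : SimpleGraph (Fin n), G.ConnectedComponent)
    (hbig : ∀ (G : SimpleGraph (Fin n)) (c : G.ConnectedComponent),
      Nat.card c.supp ≤ Nat.card (big G).supp) :
    (∑ G ∈ 𝒜, (fragC G C (big G) : ℝ)) / 𝒜.card < 2 := by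
  have hApos : 0 < 𝒜.card := Finset.card_pos.mpr hne
  have hAposR : (0:ℝ) < (𝒜.card : ℝ) := by exact_mod_cast hApos
  rcases Nat.eq_zero_or_pos n with rfl | hn
  · -- n = 0 : the fragment is empty
    have hzero : ∀ G ∈ 𝒜, (fragC G C (big G) : ℝ) = 0 := by
      intro G _
      have : fragC G C (big G) = 0 := by
        rw [fragC]
        exact Nat.card_of_isEmpty
      rw [this, Nat.cast_zero]
    rw [Finset.sum_congr rfl hzero, Finset.sum_const, smul_zero, zero_div]
    norm_num
  · have hkey := key_count hn C 𝒜 hAdd big hbig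
    set S : ℕ := ∑ G ∈ 𝒜, fragC G C (big G) with hS
    have hSlt : S < 2 * 𝒜.card := by
      by_contra hc
      push_neg at hc
      obtain ⟨m, rfl⟩ : ∃ m, n = m + 1 := ⟨n - 1, (Nat.succ_pred_eq_of_pos hn).symm⟩
      simp only [Nat.add_sub_cancel] at hkey
      nlinarith [hkey, hc, hApos]
    have hcast : (∑ G ∈ 𝒜, (fragC G C (big G) : ℝ)) = (S : ℝ) := by
      rw [hS, Nat.cast_sum]
    rw [hcast, div_lt_iff₀ hAposR]
    calc (S : ℝ) < (2 * 𝒜.card : ℕ) := by exact_mod_cast hSlt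
      _ = 2 * (𝒜.card : ℝ) := by push_cast; ring
end

section
/- Let A be a set of graphs, C a class of connected graphs each bridge-addable in A, and a a positive integer. Let B be the set of graphs G in A which have a component H in C with a ≤ v(H) ≤ v(G) − a. Then for n ≥ 2a and R_n uniform on A_n, P(R_n ∈ B) < 2/a. -/
open Finset SimpleGraph

open scoped Classical

/-- Root (minimum vertex) of the connected component of `x`. -/
noncomputable def rt {n : ℕ} (G : SimpleGraph (Fin n)) (x : Fin n) : Fin n :=
  (Finset.univ.filter (fun y => G.Reachable y x)).min'
    ⟨x, Finset.mem_filter.2 ⟨Finset.mem_univ x, SimpleGraph.Reachable.refl x⟩⟩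

lemma rt_reach {n : ℕ} (G : SimpleGraph (Fin n)) (x : Fin n) : G.Reachable (rt G x) x := by
  have h := Finset.min'_mem (Finset.univ.filter (fun y => G.Reachable y x))
    ⟨x, Finset.mem_filter.2 ⟨Finset.mem_univ x, SimpleGraph.Reachable.refl x⟩⟩
  unfold rt
  exact (Finset.mem_filter.1 h).2

lemma rt_congr {n : ℕ} {G : SimpleGraph (Fin n)} {x y : Fin n} (h : G.Reachable x y) :
    rt G x = rt G y := by
  have hAB : (Finset.univ.filter (fun z => G.Reachable z x))
      = (Finset.univ.filter (fun z => G.Reachable z y)) := by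
    apply Finset.filter_congr
    intro z _
    exact ⟨fun hz => hz.trans h, fun hz => hz.trans h.symm⟩
  unfold rt
  apply le_antisymm
  · exact Finset.min'_le _ _ (by rw [hAB]; exact Finset.min'_mem _ _)
  · exact Finset.min'_le _ _ (by rw [← hAB]; exact Finset.min'_mem _ _)

/-- In a path, any two edges containing the starting vertex coincide. -/
lemma start_edge_unique {V : Type*} {G : SimpleGraph V} {x r : V} (p : G.Walk x r)
    (hp : p.IsPath) {e₁ e₂ : Sym2 V} (h₁ : e₁ ∈ p.edges) (h₂ : e₂ ∈ p.edges)
    (hx₁ : x ∈ e₁) (hx₂ : x ∈ e₂) : e₁ = e₂ := by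
  cases p with
  | nil => simp at h₁
  | @cons _ b _ hadj q =>
    rw [SimpleGraph.Walk.edges_cons, List.mem_cons] at h₁ h₂
    have hq : ∀ e ∈ q.edges, x ∈ e → False := by
      intro e he hxe
      have hxs : x ∈ q.support := by
        induction e using Sym2.ind with
        | _ c d =>
          rcases Sym2.mem_iff.1 hxe with rfl | rfl
          · exact q.fst_mem_support_of_mem_edges he
          · exact q.snd_mem_support_of_mem_edges he
      have hh := (SimpleGraph.Walk.cons_isPath_iff hadj q).1 hp
      exact hh.2 hxs
    rcases h₁ with rfl | h₁
    · rcases h₂ with rfl | h₂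
      · rfl
      · exact absurd (hq _ h₂ hx₂) (by simp)
    · exact absurd (hq _ h₁ hx₁) (by simp)

/-- The set of bridges of a graph, as a finset of edges. -/
noncomputable def bridgeFinset {n : ℕ} (G : SimpleGraph (Fin n)) : Finset (Sym2 (Fin n)) :=
  Finset.univ.filter (fun e => e ∈ G.edgeSet ∧ G.IsBridge e)

lemma mem_bridgeFinset {n : ℕ} {G : SimpleGraph (Fin n)} {e : Sym2 (Fin n)} :
    e ∈ bridgeFinset G ↔ e ∈ G.edgeSet ∧ G.IsBridge e := by
  simp [bridgeFinset]

/-- A graph on `n` vertices has at most `n - 1` bridges. -/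
lemma card_bridges_le {n : ℕ} (hn : 0 < n) (G : SimpleGraph (Fin n)) :
    (bridgeFinset G).card ≤ n - 1 := by
  set z : Fin n := ⟨0, hn⟩ with hz
  set x₀ := rt G z with hx₀
  have hx₀fix : rt G x₀ = x₀ := rt_congr (rt_reach G z)
  -- for each bridge there is an endpoint not reachable to its root after deletion
  have hex : ∀ e ∈ bridgeFinset G,
      ∃ x, x ∈ e ∧ ¬ (G \ SimpleGraph.fromEdgeSet {e}).Reachable x (rt G x) := by
    intro e he
    rw [mem_bridgeFinset] at he
    induction e using Sym2.ind with
    | _ u v =>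
      rw [SimpleGraph.isBridge_iff, SimpleGraph.mem_edgeSet] at he
      obtain ⟨hadj, hnr⟩ := he
      by_cases h1 : (G \ SimpleGraph.fromEdgeSet {s(u, v)}).Reachable u (rt G u)
      · refine ⟨v, Sym2.mem_mk_right u v, fun h2 => ?_⟩
        have hr : rt G u = rt G v := rt_congr hadj.reachable
        rw [hr] at h1
        exact hnr (h1.trans h2.symm)
      · exact ⟨u, Sym2.mem_mk_left u v, h1⟩
  set f : Sym2 (Fin n) → Fin n := fun e =>
    if h : ∃ x, x ∈ e ∧ ¬ (G \ SimpleGraph.fromEdgeSet {e}).Reachable x (rt G x)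
    then h.choose else z with hf
  have hfspec : ∀ e ∈ bridgeFinset G,
      f e ∈ e ∧ ¬ (G \ SimpleGraph.fromEdgeSet {e}).Reachable (f e) (rt G (f e)) := by
    intro e he
    have h := hex e he
    rw [hf]
    simp only [dif_pos h]
    exact h.choose_spec
  have hmaps : ∀ e ∈ bridgeFinset G, f e ∈ Finset.univ.erase x₀ := by
    intro e he
    obtain ⟨_, hnot⟩ := hfspec e he
    refine Finset.mem_erase.2 ⟨fun hcon => ?_, Finset.mem_univ _⟩
    apply hnot
    have : rt G (f e) = f e := by rw [hcon, hx₀fix]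
    rw [this]
  have hinj : Set.InjOn f (bridgeFinset G) := by
    intro e₁ he₁ e₂ he₂ hfe
    rw [Finset.mem_coe] at he₁ he₂
    obtain ⟨hx₁, hn₁⟩ := hfspec e₁ he₁
    obtain ⟨hx₂, hn₂⟩ := hfspec e₂ he₂
    rw [hfe] at hx₁ hn₁
    set x := f e₂ with hxdef
    -- a path from x to its root
    have hreach : G.Reachable x (rt G x) := (rt_reach G x).symm
    obtain ⟨wlk⟩ := hreach
    set p := wlk.toPath with hp
    have hmemedge : ∀ e ∈ bridgeFinset G, x ∈ e →
        ¬ (G \ SimpleGraph.fromEdgeSet {e}).Reachable x (rt G x) →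
        e ∈ (p : G.Walk x (rt G x)).edges := by
      intro e he hxe hnr
      by_contra hne
      apply hnr
      refine ⟨(p : G.Walk x (rt G x)).transfer (G \ SimpleGraph.fromEdgeSet {e}) ?_⟩
      intro e' he'
      have h1 : e' ∈ G.edgeSet := (p : G.Walk x (rt G x)).edges_subset_edgeSet he'
      have h2 : e' ≠ e := fun hcon => hne (hcon ▸ he')
      rw [SimpleGraph.edgeSet_sdiff, SimpleGraph.edgeSet_fromEdgeSet,
        SimpleGraph.edgeSet_sdiff_sdiff_isDiag]
      exact ⟨h1, by simpa using h2⟩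
    have he₁p := hmemedge e₁ he₁ hx₁ hn₁
    have he₂p := hmemedge e₂ he₂ hx₂ hn₂
    exact start_edge_unique (p : G.Walk x (rt G x)) p.2 he₁p he₂p hx₁ hx₂
  calc (bridgeFinset G).card ≤ (Finset.univ.erase x₀).card :=
        Finset.card_le_card_of_injOn f hmaps hinj
    _ = n - 1 := by
        rw [Finset.card_erase_of_mem (Finset.mem_univ _), Finset.card_univ, Fintype.card_fin]

lemma addEdge_comm {V : Type*} (G : SimpleGraph V) (u v : V) :
    addEdge G u v = addEdge G v u := by
  unfold addEdge
  rw [Sym2.eq_swap]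

lemma addEdge_sdiff {V : Type*} (G : SimpleGraph V) {u v : V} (h : ¬ G.Adj u v) :
    (addEdge G u v) \ SimpleGraph.fromEdgeSet {s(u, v)} = G := by
  ext x y
  simp only [SimpleGraph.sdiff_adj, addEdge, SimpleGraph.sup_adj, SimpleGraph.fromEdgeSet_adj,
    Set.mem_singleton_iff]
  constructor
  · rintro ⟨hor, hnot⟩
    rcases hor with hG | hF
    · exact hG
    · exact absurd hF hnot
  · intro hG
    refine ⟨Or.inl hG, fun ⟨he, hxy⟩ => ?_⟩
    rcases Sym2.eq_iff.1 he with ⟨rfl, rfl⟩ | ⟨rfl, rfl⟩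
    · exact h hG
    · exact h hG.symm

lemma nat_prod_bound {a s n : ℕ} (ha : 1 ≤ a) (h1 : a ≤ s) (h2 : s ≤ n - a) :
    a * (n - a) ≤ (n - s) * s := by
  have hsn : s + a ≤ n := by omega
  obtain ⟨s', rfl⟩ := Nat.exists_eq_add_of_le h1
  have ht : a ≤ n - (a + s') := by omega
  obtain ⟨t', ht'⟩ := Nat.exists_eq_add_of_le ht
  have hna : n - a = (a + s') + t' := by omega
  rw [hna, ht']
  calc a * (a + s' + t') = a * a + a * s' + a * t' := by ring
    _ ≤ a * a + a * s' + a * t' + t' * s' := Nat.le_add_right _ _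
    _ = (a + t') * (a + s') := by ring

/-- with `C` a class of connected graphs each bridge-addable in `A`, `a ≥ 1`,
and `B` the set of graphs `G ∈ A` having a component `H ∈ C` with `a ≤ v(H) ≤ v(G) - a`,
for `n ≥ 2a` and `R_n` uniform on `A_n` we have `P(R_n ∈ B) < 2/a`. -/
theorem stmt5 (n : ℕ) (𝒜 : Finset (SimpleGraph (Fin n))) (hne : 𝒜.Nonempty)
    (C : ∀ m : ℕ, Set (SimpleGraph (Fin m)))
    (hCconn : ∀ m, ∀ H ∈ C m, SimpleGraph.Connected H)
    (hAdd : ∀ G ∈ 𝒜, ∀ u v : Fin n,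
      G.connectedComponentMk u ≠ G.connectedComponentMk v →
      memClass C (compGraph G u) → addEdge G u v ∈ 𝒜)
    (a : ℕ) (ha : 1 ≤ a) (hna : 2 * a ≤ n) :
    (Nat.card {G : SimpleGraph (Fin n) // G ∈ 𝒜 ∧ ∃ v : Fin n,
        memClass C (compGraph G v) ∧
        a ≤ Nat.card (G.connectedComponentMk v).supp ∧
        Nat.card (G.connectedComponentMk v).supp ≤ n - a} : ℝ) / 𝒜.card
      < 2 / a := by
  have hn2 : 2 ≤ n := by omega
  have hn0 : 0 < n := by omega
  set P : SimpleGraph (Fin n) → Prop := fun G => ∃ v : Fin n,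
      memClass C (compGraph G v) ∧
      a ≤ Nat.card (G.connectedComponentMk v).supp ∧
      Nat.card (G.connectedComponentMk v).supp ≤ n - a with hP
  set Bf : Finset (SimpleGraph (Fin n)) := 𝒜.filter P with hBf
  -- identify the Nat.card with Bf.card
  have hcard : Nat.card {G : SimpleGraph (Fin n) // G ∈ 𝒜 ∧ P G} = Bf.card := by
    rw [Nat.card_eq_fintype_card]
    rw [← Fintype.card_coe Bf]
    apply Fintype.card_congr
    apply Equiv.subtypeEquivRight
    intro G
    simp [hBf, Finset.mem_filter]
  -- witness choice
  set w : SimpleGraph (Fin n) → Fin n := fun G =>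
    if h : P G then h.choose else ⟨0, hn0⟩ with hw
  have hwspec : ∀ G, P G → memClass C (compGraph G (w G)) ∧
      a ≤ Nat.card (G.connectedComponentMk (w G)).supp ∧
      Nat.card (G.connectedComponentMk (w G)).supp ≤ n - a := by
    intro G h
    have hwg : w G = h.choose := by rw [hw]; exact dif_pos h
    rw [hwg]
    exact h.choose_spec
  -- the two finsets for double counting
  set pairs : SimpleGraph (Fin n) → Finset (Fin n × Fin n) := fun G =>
    (Finset.univ.filter (fun u => u ∉ (G.connectedComponentMk (w G)).supp)) ×ˢ
      ((G.connectedComponentMk (w G)).supp.toFinset) with hpairs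
  set T₁ : Finset (Σ _ : SimpleGraph (Fin n), Fin n × Fin n) := Bf.sigma pairs with hT₁
  set T₂ : Finset (Σ _ : SimpleGraph (Fin n), Sym2 (Fin n)) := 𝒜.sigma (fun G' => bridgeFinset G')
    with hT₂
  set F : (Σ _ : SimpleGraph (Fin n), Fin n × Fin n) → (Σ _ : SimpleGraph (Fin n), Sym2 (Fin n)) :=
    fun x => ⟨addEdge x.1 x.2.1 x.2.2, s(x.2.1, x.2.2)⟩ with hF
  -- basic unpacking of membership in T₁
  have hT₁mem : ∀ x ∈ T₁, x.1 ∈ 𝒜 ∧ P x.1 ∧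
      x.2.1 ∉ (x.1.connectedComponentMk (w x.1)).supp ∧
      x.2.2 ∈ (x.1.connectedComponentMk (w x.1)).supp := by
    rintro ⟨G, u, v⟩ hx
    rw [hT₁, Finset.mem_sigma] at hx
    obtain ⟨hG, hp⟩ := hx
    rw [hBf, Finset.mem_filter] at hG
    rw [hpairs, Finset.mem_product] at hp
    obtain ⟨hu, hv⟩ := hp
    rw [Finset.mem_filter] at hu
    rw [Set.mem_toFinset] at hv
    exact ⟨hG.1, hG.2, hu.2, hv⟩
  -- the map is well-defined
  have hmaps : ∀ x ∈ T₁, F x ∈ T₂ := by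
    rintro ⟨G, u, v⟩ hx
    obtain ⟨hGA, hPG, hu, hv⟩ := hT₁mem _ hx
    have hmkv : G.connectedComponentMk v = G.connectedComponentMk (w G) :=
      (SimpleGraph.ConnectedComponent.mem_supp_iff _ _).1 hv
    have hmku : G.connectedComponentMk u ≠ G.connectedComponentMk (w G) := by
      intro hcon
      exact hu ((SimpleGraph.ConnectedComponent.mem_supp_iff _ _).2 hcon)
    have hmkne : G.connectedComponentMk v ≠ G.connectedComponentMk u := by
      rw [hmkv]; exact fun hcon => hmku hcon.symm
    have hmemC : memClass C (compGraph G v) := by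
      show memClass C (G.induce (G.connectedComponentMk v).supp)
      rw [hmkv]
      exact (hwspec G hPG).1
    have hG'A : addEdge G u v ∈ 𝒜 := by
      rw [addEdge_comm]
      exact hAdd G hGA v u hmkne hmemC
    have huvne : u ≠ v := by
      intro hcon
      subst hcon
      exact hmkne rfl
    have hnadj : ¬ G.Adj u v := by
      intro hcon
      exact hmkne (SimpleGraph.ConnectedComponent.sound hcon.reachable).symm
    rw [hT₂, Finset.mem_sigma]
    refine ⟨hG'A, mem_bridgeFinset.2 ?_⟩
    rw [SimpleGraph.isBridge_iff, SimpleGraph.mem_edgeSet]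
    constructor
    · exact Or.inr ((SimpleGraph.fromEdgeSet_adj _).2 ⟨rfl, huvne⟩)
    · intro hreach
      have hle : (addEdge G u v) \ SimpleGraph.fromEdgeSet {s(u, v)} ≤ G := by
        rw [addEdge_sdiff G hnadj]
      have : G.Reachable u v := hreach.mono hle
      exact hmkne (SimpleGraph.ConnectedComponent.sound this).symm
  -- injectivity
  have hinj : Set.InjOn F T₁ := by
    rintro ⟨G₁, u₁, v₁⟩ hx₁ ⟨G₂, u₂, v₂⟩ hx₂ heq
    rw [Finset.mem_coe] at hx₁ hx₂
    obtain ⟨hGA₁, hPG₁, hu₁, hv₁⟩ := hT₁mem _ hx₁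
    obtain ⟨hGA₂, hPG₂, hu₂, hv₂⟩ := hT₁mem _ hx₂
    rw [hF] at heq
    have hGeq : addEdge G₁ u₁ v₁ = addEdge G₂ u₂ v₂ := congrArg Sigma.fst heq
    have hee' : s(u₁, v₁) = s(u₂, v₂) :=
      congrArg (fun z : (Σ _ : SimpleGraph (Fin n), Sym2 (Fin n)) => z.2) heq
    have hnadj₁ : ¬ G₁.Adj u₁ v₁ := by
      intro hcon
      have h1 : G₁.connectedComponentMk v₁ = G₁.connectedComponentMk (w G₁) :=
        (SimpleGraph.ConnectedComponent.mem_supp_iff _ _).1 hv₁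
      have h2 := SimpleGraph.ConnectedComponent.sound hcon.reachable
      exact hu₁ ((SimpleGraph.ConnectedComponent.mem_supp_iff _ _).2 (h2.trans h1))
    have hnadj₂ : ¬ G₂.Adj u₂ v₂ := by
      intro hcon
      have h1 : G₂.connectedComponentMk v₂ = G₂.connectedComponentMk (w G₂) :=
        (SimpleGraph.ConnectedComponent.mem_supp_iff _ _).1 hv₂
      have h2 := SimpleGraph.ConnectedComponent.sound hcon.reachable
      exact hu₂ ((SimpleGraph.ConnectedComponent.mem_supp_iff _ _).2 (h2.trans h1))
    have hG12 : G₁ = G₂ := by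
      have e₁ := addEdge_sdiff G₁ hnadj₁
      have e₂ := addEdge_sdiff G₂ hnadj₂
      rw [← e₁, ← e₂, hGeq, hee']
    subst hG12
    rcases Sym2.eq_iff.1 hee' with ⟨rfl, rfl⟩ | ⟨h1, h2⟩
    · rfl
    · exfalso
      rw [← h2] at hu₂
      exact hu₂ hv₁
  have hcardle : T₁.card ≤ T₂.card := Finset.card_le_card_of_injOn F hmaps hinj
  -- lower bound for T₁
  have hT₁card : Bf.card * (a * (n - a)) ≤ T₁.card := by
    rw [hT₁, Finset.card_sigma]
    have hbound : ∀ G ∈ Bf, a * (n - a) ≤ (pairs G).card := by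
      intro G hG
      rw [hBf, Finset.mem_filter] at hG
      obtain ⟨_, hPG⟩ := hG
      obtain ⟨_, hs1, hs2⟩ := hwspec G hPG
      set S := (G.connectedComponentMk (w G)).supp with hS
      have hscard : Nat.card S = S.toFinset.card := by
        rw [Nat.card_coe_set_eq, Set.ncard_eq_toFinset_card']
      have hfilter : (Finset.univ.filter (fun u : Fin n => u ∈ S)).card = S.toFinset.card := by
        congr 1
        ext u
        simp [Set.mem_toFinset]
      have hcompl : (Finset.univ.filter (fun u : Fin n => u ∉ S)).card
          = n - S.toFinset.card := by
        have := Finset.card_filter_add_card_filter_not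
          (s := (Finset.univ : Finset (Fin n))) (p := fun u => u ∈ S)
        rw [Finset.card_univ, Fintype.card_fin] at this
        omega
      rw [hpairs]
      rw [Finset.card_product, hcompl]
      rw [hscard] at hs1 hs2
      exact nat_prod_bound ha hs1 hs2
    calc Bf.card * (a * (n - a)) = ∑ _G ∈ Bf, a * (n - a) := by
          rw [Finset.sum_const, smul_eq_mul]
      _ ≤ ∑ G ∈ Bf, (pairs G).card := Finset.sum_le_sum hbound
  -- upper bound for T₂
  have hT₂card : T₂.card ≤ 𝒜.card * (n - 1) := by
    rw [hT₂, Finset.card_sigma]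
    calc ∑ G' ∈ 𝒜, (bridgeFinset G').card ≤ ∑ _G' ∈ 𝒜, (n - 1) :=
          Finset.sum_le_sum (fun G' _ => card_bridges_le hn0 G')
      _ = 𝒜.card * (n - 1) := by rw [Finset.sum_const, smul_eq_mul]
  have key : Bf.card * (a * (n - a)) ≤ 𝒜.card * (n - 1) :=
    le_trans hT₁card (le_trans hcardle hT₂card)
  have hAc : 0 < 𝒜.card := Finset.card_pos.2 hne
  -- derive the strict numeric inequality
  have h3 : (Bf.card * a) * (n - a) < (2 * 𝒜.card) * (n - a) := by
    calc (Bf.card * a) * (n - a) = Bf.card * (a * (n - a)) := by ring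
      _ ≤ 𝒜.card * (n - 1) := key
      _ < 𝒜.card * (2 * (n - a)) := by
          exact mul_lt_mul_of_pos_left (by omega : n - 1 < 2 * (n - a)) hAc
      _ = (2 * 𝒜.card) * (n - a) := by ring
  have hfin : Bf.card * a < 2 * 𝒜.card := lt_of_mul_lt_mul_right h3 (Nat.zero_le _)
  rw [hcard]
  rw [div_lt_div_iff₀ (by exact_mod_cast hAc) (by exact_mod_cast ha)]
  exact_mod_cast hfin
end

section
/- If X is a nonnegative-integer-valued random variable satisfying P(X = k+1) ≤ (1/k)·P(X = k) for every k ≥ 1, and P(X ≥ 1) = 1, then X is stochastically dominated by 1 + Po(1), where Po(1) is a Poisson random variable with mean 1. -/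
private lemma ind_tsum (f : ℕ → ℝ) (s : ℕ) :
    ∑' j, (if s ≤ j then f j else 0) = ∑' i, f (s + i) := by
  have hinj : Function.Injective (fun i : ℕ => s + i) := add_right_injective s
  have hsupp : Function.support (fun j => if s ≤ j then f j else 0) ⊆
      Set.range (fun i : ℕ => s + i) := by
    intro x hx
    by_cases h : s ≤ x
    · exact ⟨x - s, show s + (x - s) = x by omega⟩
    · simp [h] at hx
  have := hinj.tsum_eq hsupp
  rw [← this]
  refine tsum_congr fun i => ?_
  simp

private lemma ind_summable (f : ℕ → ℝ) (hf : Summable f) (s : ℕ) :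
    Summable (fun j => if s ≤ j then f j else 0) := by
  have : (fun j => if s ≤ j then f j else 0) = Set.indicator {j | s ≤ j} f := by
    funext j; simp [Set.indicator_apply]
  rw [this]
  exact hf.indicator _

private lemma key (P Q : ℕ → ℝ) (hP0 : ∀ j, 0 ≤ P j) (hQpos : ∀ j, 0 < Q j)
    (hPs : Summable P) (hQs : Summable Q) (hPtot : ∑' j, P j = 1) (hQtot : ∑' j, Q j = 1)
    (hratio : ∀ j, P (j + 1) * Q j ≤ Q (j + 1) * P j) (s : ℕ) :
    ∑' j, (if s ≤ j then P j else 0) ≤ ∑' j, (if s ≤ j then Q j else 0) := by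
  have mono : ∀ a k, a ≤ k → P k * Q a ≤ Q k * P a := by
    intro a k hak
    induction k, hak using Nat.le_induction with
    | base => ring_nf; exact le_rfl
    | succ k hk ih =>
      have h1 := hratio k
      have h2 := mul_le_mul_of_nonneg_right h1 (hQpos a).le
      have h3 := mul_le_mul_of_nonneg_left ih (hQpos (k+1)).le
      have h4 : P (k+1) * Q k * Q a ≤ Q (k+1) * (Q k * P a) := by nlinarith
      nlinarith [hQpos k]
  by_cases h : P s ≤ Q s
  · refine Summable.tsum_le_tsum ?_ (ind_summable P hPs s) (ind_summable Q hQs s)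
    intro j
    by_cases hj : s ≤ j
    · simp only [hj, if_true]
      have h1 := mono s j hj
      have h2 : Q j * P s ≤ Q j * Q s := mul_le_mul_of_nonneg_left h (hQpos j).le
      nlinarith [hQpos s]
    · simp [hj]
  · push_neg at h
    have hPQ : ∀ j, j ≤ s → Q j ≤ P j := by
      intro j hj
      have h1 := mono j s hj
      have hPs' : 0 < P s := lt_of_le_of_lt (hQpos s).le h
      have h2 : P j * Q s ≤ P j * P s := mul_le_mul_of_nonneg_left h.le (hP0 j)
      nlinarith
    have hhead : ∑ j ∈ Finset.range s, Q j ≤ ∑ j ∈ Finset.range s, P j :=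
      Finset.sum_le_sum fun j hj => hPQ j (by simpa using (Finset.mem_range.mp hj).le)
    have hPtail : ∑' j, (if s ≤ j then P j else 0) = 1 - ∑ j ∈ Finset.range s, P j := by
      rw [ind_tsum]
      have := Summable.sum_add_tsum_nat_add (f := P) s hPs
      have heq : ∑' i, P (s + i) = ∑' i, P (i + s) := by
        refine tsum_congr fun i => by rw [add_comm]
      rw [heq]; linarith [this, hPtot]
    have hQtail : ∑' j, (if s ≤ j then Q j else 0) = 1 - ∑ j ∈ Finset.range s, Q j := by
      rw [ind_tsum]
      have := Summable.sum_add_tsum_nat_add (f := Q) s hQs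
      have heq : ∑' i, Q (s + i) = ∑' i, Q (i + s) := by
        refine tsum_congr fun i => by rw [add_comm]
      rw [heq]; linarith [this, hQtot]
    rw [hPtail, hQtail]
    linarith

/-- if `X` is an `ℕ`-valued random variable (with mass function `p`) satisfying
`P(X = k+1) ≤ (1/k) P(X = k)` for all `k ≥ 1` and `P(X ≥ 1) = 1`, then `X` is stochastically
dominated by `1 + Po(1)`: `P(X ≥ t) ≤ P(1 + Po(1) ≥ t)` for all `t`. -/
theorem stmt8 (p : ℕ → ℝ) (hp0 : ∀ k, 0 ≤ p k) (hsum : Summable p)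
    (htot : ∑' k, p k = 1) (hX1 : p 0 = 0)
    (hrec : ∀ k : ℕ, 1 ≤ k → p (k + 1) ≤ p k / k) :
    ∀ t : ℕ,
      (∑' k : ℕ, if t ≤ k then p k else 0)
        ≤ ∑' j : ℕ, if t ≤ 1 + j then Real.exp (-1) / (Nat.factorial j) else 0 := by
  -- set up Q
  set Q : ℕ → ℝ := fun j => Real.exp (-1) / (Nat.factorial j) with hQdef
  have hQpos : ∀ j, 0 < Q j := fun j =>
    div_pos (Real.exp_pos _) (by exact_mod_cast Nat.factorial_pos j)
  have hQsum : HasSum Q 1 := by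
    have := ProbabilityTheory.poissonPMFRealSum 1
    have heq : (fun n => ProbabilityTheory.poissonPMFReal 1 n) = Q := by
      funext n
      simp [ProbabilityTheory.poissonPMFReal, hQdef]
    rw [← heq]; exact this
  have hQs : Summable Q := hQsum.summable
  have hQtot : ∑' j, Q j = 1 := hQsum.tsum_eq
  -- set up P
  set P : ℕ → ℝ := fun j => p (j + 1) with hPdef
  have hPs : Summable P := by
    have := (summable_nat_add_iff 1).mpr hsum
    simpa [hPdef] using this
  have hP0 : ∀ j, 0 ≤ P j := fun j => hp0 _
  have hPtot : ∑' j, P j = 1 := by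
    have := Summable.tsum_eq_zero_add hsum
    rw [htot, hX1] at this
    simpa [hPdef] using this.symm
  have hratio : ∀ j, P (j + 1) * Q j ≤ Q (j + 1) * P j := by
    intro j
    have h1 : p (j + 1 + 1) ≤ p (j + 1) / ((j:ℝ) + 1) := by
      have := hrec (j + 1) (by omega)
      push_cast at this
      convert this using 2
    have hQrec : Q (j + 1) = Q j / (j + 1) := by
      simp only [hQdef, Nat.factorial_succ]
      push_cast
      field_simp
    rw [hQrec]
    have hj1 : (0:ℝ) < (j:ℝ) + 1 := by positivity
    simp only [hPdef]
    have h2 : p (j + 1 + 1) * Q j ≤ (p (j + 1) / ((j:ℝ) + 1)) * Q j :=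
      mul_le_mul_of_nonneg_right h1 (hQpos j).le
    calc p (j + 1 + 1) * Q j ≤ (p (j + 1) / ((j:ℝ) + 1)) * Q j := h2
      _ = Q j / ((j:ℝ) + 1) * p (j + 1) := by ring
  intro t
  match t with
  | 0 =>
    simp only [Nat.zero_le, if_true]
    rw [htot]
    exact le_of_eq hQtot.symm
  | (s + 1) =>
    have hL : (∑' k : ℕ, if s + 1 ≤ k then p k else 0)
        = ∑' j, (if s ≤ j then P j else 0) := by
      rw [ind_tsum p (s+1), ind_tsum P s]
      refine tsum_congr fun i => ?_
      simp only [hPdef]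
      congr 1
      omega
    have hR : (∑' j : ℕ, if s + 1 ≤ 1 + j then Real.exp (-1) / (Nat.factorial j) else 0)
        = ∑' j, (if s ≤ j then Q j else 0) := by
      refine tsum_congr fun j => ?_
      by_cases hj : s ≤ j
      · rw [if_pos (by omega), if_pos hj]
      · rw [if_neg (by omega), if_neg hj]
    rw [hL, hR]
    exact key P Q hP0 hQpos hPs hQs hPtot hQtot hratio s
end
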